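/- arXiv:1710.05243 — 5 statements merged into one kernel-verified Lean document; each statement's English description precedes it below -/
import Mathlib

section
/- Suppose η : [0,π] → ℝ is infinitely differentiable, p is a positive integer, A > 0, and {ρ_{n,j}}_{(n,j)∈J} is a family of functions from [0,π] to ℝ with sup_{x∈[0,π]} |ρ_{n,j}(x)| ≤ A/(n+s)^{p+1} for all (n,j) ∈ J. Suppose further that for each (n,j) ∈ J the equation x = u_{n,j} + η(x)/(n+s) + ρ_{n,j}(x) has a unique solution φ_{n,j} in [0,π]. Then there exist infinitely differentiable functions c_0, …, c_p : [0,π] → ℝ, depending only on η and satisfying c_0(x) = x, c_1 = η, c_2 = ηη′, and a constant r_p > 0 such that |φ_{n,j} − Σ_{k=0}^{p} c_k(u_{n,j})/(n+s)^k| ≤ r_p/(n+s)^{p+1} for all (n,j) ∈ J. -/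
/-!
Write `ε = 1/(n+s)`, `u = u_{n,j}` and `φ = u + δ`, so that `δ = ε η(u + δ) + O(ε^{p+1})`.
Taylor expansion of `η` at `u` turns this into `δ ≈ ε g_u(δ)`, where `g_u` is the Taylor
polynomial of `η` at `u`. Over the ring of smooth functions of `u`, the Picard iteration
`P ↦ X · g(P)` gains one correct power of `X` per step, so after `p + 1` steps its truncation `T`
at degree `p` is a fixed point modulo `X^{p+1}`. Evaluated at `X = ε`, both `δ` and `T(ε)` are
fixed points of `y ↦ ε g_u(y)` up to `O(ε^{p+1})`, uniformly in `u`, and this map is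
`O(ε)`-Lipschitz on bounded sets; hence `|δ - T(ε)| = O(ε^{p+1})`. The coefficients of the
Picard iterate are the `c_k`, and `c_1 = η`, `c_2 = η η'` are read off the fixed-point relation.
-/

open Real Set Polynomial
open scoped ContDiff Nat

section Picard

variable {R : Type*} [CommRing R]

noncomputable def picardStep (g P : R[X]) : R[X] := X * g.comp P

lemma sub_dvd_comp_sub_comp (g P Q : R[X]) : P - Q ∣ g.comp P - g.comp Q := by
  simpa only [eval_map, eval₂_C_X, comp] using sub_dvd_eval_sub P Q (g.map C)

lemma X_pow_succ_dvd_picardStep_sub {g P Q : R[X]} {m : ℕ} (h : X ^ m ∣ P - Q) :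
    X ^ (m + 1) ∣ picardStep g P - picardStep g Q := by
  rw [picardStep, picardStep, ← mul_sub, pow_succ']
  exact mul_dvd_mul_left X (h.trans (sub_dvd_comp_sub_comp g P Q))

noncomputable def picardApprox (g : R[X]) : ℕ → R[X]
  | 0 => 0
  | n + 1 => picardStep g (picardApprox g n)

lemma X_pow_succ_dvd_picardStep_picardApprox_sub (g : R[X]) :
    ∀ n, X ^ (n + 1) ∣ picardStep g (picardApprox g n) - picardApprox g n
  | 0 => by simp [picardApprox, picardStep]
  | n + 1 => X_pow_succ_dvd_picardStep_sub (X_pow_succ_dvd_picardStep_picardApprox_sub g n)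

lemma X_pow_dvd_picardStep_sub_of_X_pow_dvd_sub {g S T : R[X]} {m : ℕ}
    (hS : X ^ m ∣ picardStep g S - S) (hST : X ^ m ∣ T - S) :
    X ^ m ∣ picardStep g T - T := by
  have hW : X ^ m ∣ picardStep g T - picardStep g S :=
    (pow_dvd_pow X m.le_succ).trans (X_pow_succ_dvd_picardStep_sub hST)
  have := dvd_add (dvd_sub hW hST) hS
  rwa [show picardStep g T - picardStep g S - (T - S) + (picardStep g S - S)
    = picardStep g T - T by ring] at this

lemma coeff_zero_comp (g q : R[X]) : (g.comp q).coeff 0 = g.eval (q.coeff 0) := by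
  simp [coeff_zero_eq_eval_zero, eval_comp]

lemma coeff_one_comp (g q : R[X]) (hq : q.coeff 0 = 0) :
    (g.comp q).coeff 1 = g.coeff 1 * q.coeff 1 := by
  have h := coeff_derivative (g.comp q) 0
  rw [derivative_comp, mul_coeff_zero, coeff_zero_comp, hq, ← coeff_zero_eq_eval_zero,
    coeff_derivative, coeff_derivative] at h
  simpa [mul_comm] using h.symm

lemma coeff_zero_picardStep (g P : R[X]) : (picardStep g P).coeff 0 = 0 :=
  coeff_X_mul_zero _

lemma coeff_zero_picardApprox (g : R[X]) : ∀ n, (picardApprox g n).coeff 0 = 0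
  | 0 => coeff_zero 0
  | _ + 1 => coeff_zero_picardStep _ _

lemma coeff_succ_picardStep (g P : R[X]) (k : ℕ) :
    (picardStep g P).coeff (k + 1) = (g.comp P).coeff k :=
  coeff_X_mul _ _

lemma coeff_one_of_X_pow_dvd_picardStep_sub {g S : R[X]} (hS0 : S.coeff 0 = 0)
    (hS : X ^ 2 ∣ picardStep g S - S) : S.coeff 1 = g.coeff 0 := by
  have := (X_pow_dvd_iff.1 hS 1 (by norm_num))
  rw [coeff_sub, coeff_succ_picardStep, coeff_zero_comp, hS0, sub_eq_zero] at this
  rw [← this, coeff_zero_eq_eval_zero]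

lemma coeff_two_of_X_pow_dvd_picardStep_sub {g S : R[X]} (hS0 : S.coeff 0 = 0)
    (hS : X ^ 3 ∣ picardStep g S - S) : S.coeff 2 = g.coeff 1 * g.coeff 0 := by
  have h1 := coeff_one_of_X_pow_dvd_picardStep_sub hS0 ((pow_dvd_pow X (by norm_num)).trans hS)
  have := (X_pow_dvd_iff.1 hS 2 (by norm_num))
  rw [coeff_sub, coeff_succ_picardStep, coeff_one_comp _ _ hS0, h1, sub_eq_zero] at this
  exact this.symm

lemma eval₂_picardStep {S : Type*} [CommRing S] (e : R →+* S) (g P : R[X]) (x : S) :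
    (picardStep g P).eval₂ e x = x * g.eval₂ e (P.eval₂ e x) := by
  rw [picardStep, eval₂_mul, eval₂_X, eval₂_comp]

lemma X_pow_dvd_trunc_sub (P : R[X]) (n : ℕ) :
    X ^ n ∣ PowerSeries.trunc n (P : PowerSeries R) - P :=
  X_pow_dvd_iff.2 fun k hk => by
    rw [coeff_sub, PowerSeries.coeff_trunc, if_pos hk, Polynomial.coeff_coe, sub_self]

end Picard

def smoothOnSubring (s : Set ℝ) : Subring (ℝ → ℝ) where
  carrier := {f | ContDiffOn ℝ ∞ f s}
  mul_mem' hf hg := hf.mul hg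
  one_mem' := contDiffOn_const
  add_mem' hf hg := hf.add hg
  zero_mem' := contDiffOn_const
  neg_mem' hf := hf.neg

def smoothOnSubring.eval (s : Set ℝ) (u : ℝ) : smoothOnSubring s →+* ℝ :=
  (Pi.evalRingHom (fun _ => ℝ) u).comp (smoothOnSubring s).subtype

@[simp] lemma smoothOnSubring.eval_apply (s : Set ℝ) (u : ℝ) (f : smoothOnSubring s) :
    smoothOnSubring.eval s u f = (f : ℝ → ℝ) u := rfl

lemma iteratedDerivWithin_mem_smoothOnSubring {s : Set ℝ} (hs : UniqueDiffOn ℝ s) {f : ℝ → ℝ}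
    (hf : f ∈ smoothOnSubring s) (k : ℕ) : iteratedDerivWithin k f s ∈ smoothOnSubring s := by
  induction k with
  | zero => rwa [iteratedDerivWithin_zero]
  | succ k ih =>
    rw [iteratedDerivWithin_succ]
    exact ContDiffOn.derivWithin ih hs le_rfl

lemma exists_bound_of_mem_smoothOnSubring {a b : ℝ} {f : ℝ → ℝ}
    (hf : f ∈ smoothOnSubring (Icc a b)) : ∃ K, ∀ u ∈ Icc a b, |f u| ≤ K :=
  isCompact_Icc.exists_bound_of_continuousOn hf.continuousOn

noncomputable def taylorWithinPoly {s : Set ℝ} (hs : UniqueDiffOn ℝ s) {f : ℝ → ℝ}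
    (hf : f ∈ smoothOnSubring s) (n : ℕ) : (smoothOnSubring s)[X] :=
  ∑ k ∈ Finset.range (n + 1), C ⟨fun x => iteratedDerivWithin k f s x / k !,
    (iteratedDerivWithin_mem_smoothOnSubring hs hf k).div_const _⟩ * X ^ k

section TaylorWithinPoly

variable {s : Set ℝ} (hs : UniqueDiffOn ℝ s) {f : ℝ → ℝ} (hf : f ∈ smoothOnSubring s) (n : ℕ)

lemma eval₂_taylorWithinPoly (u x : ℝ) :
    (taylorWithinPoly hs hf n).eval₂ (smoothOnSubring.eval s u) (x - u) =
      taylorWithinEval f n s u x := by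
  simp only [taylorWithinPoly, eval₂_finsetSum, eval₂_mul, eval₂_C, eval₂_X_pow,
    taylor_within_apply, smul_eq_mul, smoothOnSubring.eval_apply]
  exact Finset.sum_congr rfl fun k _ => by ring

lemma coeff_taylorWithinPoly {k : ℕ} (hk : k ≤ n) :
    ((taylorWithinPoly hs hf n).coeff k : ℝ → ℝ) = fun x => iteratedDerivWithin k f s x / k ! := by
  simp [taylorWithinPoly, coeff_C_mul, coeff_X_pow, Nat.lt_succ_iff.2 hk]

end TaylorWithinPoly

section EvalBounds

variable {R : Type*} [Semiring R] (e : R →+* ℝ) (P : R[X]) {K : ℕ → ℝ}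

lemma abs_eval₂_le (hK : ∀ k, |e (P.coeff k)| ≤ K k) {x : ℝ} (hx : |x| ≤ 1) :
    |P.eval₂ e x| ≤ ∑ k ∈ Finset.range (P.natDegree + 1), K k := by
  rw [eval₂_eq_sum_range]
  refine (Finset.abs_sum_le_sum_abs _ _).trans (Finset.sum_le_sum fun k _ => ?_)
  rw [abs_mul, abs_pow]
  calc |e (P.coeff k)| * |x| ^ k ≤ K k * 1 :=
        mul_le_mul (hK k) (pow_le_one₀ (abs_nonneg x) hx) (by positivity)
          ((abs_nonneg _).trans (hK k))
    _ = K k := mul_one _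

lemma abs_eval₂_sub_eval₂_le (hK : ∀ k, |e (P.coeff k)| ≤ K k) {M x y : ℝ} (hx : |x| ≤ M)
    (hy : |y| ≤ M) :
    |P.eval₂ e x - P.eval₂ e y| ≤
      (∑ k ∈ Finset.range (P.natDegree + 1), K k * (k * M ^ (k - 1))) * |x - y| := by
  rw [eval₂_eq_sum_range, eval₂_eq_sum_range, ← Finset.sum_sub_distrib, Finset.sum_mul]
  refine (Finset.abs_sum_le_sum_abs _ _).trans (Finset.sum_le_sum fun k _ => ?_)
  have hpow : |x ^ k - y ^ k| ≤ k * M ^ (k - 1) * |x - y| := by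
    calc |x ^ k - y ^ k| ≤ |x - y| * k * max |x| |y| ^ (k - 1) := abs_pow_sub_pow_le x y k
      _ ≤ |x - y| * k * M ^ (k - 1) := by gcongr; exact max_le hx hy
      _ = k * M ^ (k - 1) * |x - y| := by ring
  rw [← mul_sub, abs_mul]
  calc |e (P.coeff k)| * |x ^ k - y ^ k| ≤ K k * (k * M ^ (k - 1) * |x - y|) :=
        mul_le_mul (hK k) hpow (abs_nonneg _) ((abs_nonneg _).trans (hK k))
    _ = K k * (k * M ^ (k - 1)) * |x - y| := by ring

end EvalBounds

section Uniform

variable {a b : ℝ} (P : (smoothOnSubring (Icc a b))[X])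

lemma exists_abs_eval₂_le_of_abs_le_one :
    ∃ K, ∀ u ∈ Icc a b, ∀ x : ℝ, |x| ≤ 1 → |P.eval₂ (smoothOnSubring.eval _ u) x| ≤ K := by
  choose K hK using fun k => exists_bound_of_mem_smoothOnSubring (P.coeff k).2
  exact ⟨_, fun u hu x hx => abs_eval₂_le _ P (fun k => hK k u hu) hx⟩

lemma exists_abs_eval₂_sub_eval₂_le (M : ℝ) :
    ∃ L, ∀ u ∈ Icc a b, ∀ x y : ℝ, |x| ≤ M → |y| ≤ M →
      |P.eval₂ (smoothOnSubring.eval _ u) x - P.eval₂ (smoothOnSubring.eval _ u) y| ≤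
        L * |x - y| := by
  choose K hK using fun k => exists_bound_of_mem_smoothOnSubring (P.coeff k).2
  exact ⟨_, fun u hu x y hx hy => abs_eval₂_sub_eval₂_le _ P (fun k => hK k u hu) hx hy⟩

end Uniform

theorem exists_abs_sub_taylorWithinEval_le {f : ℝ → ℝ} {a b : ℝ} {n : ℕ} (hab : a < b)
    (hf : ContDiffOn ℝ (n + 1) f (Icc a b)) :
    ∃ C, 0 ≤ C ∧ ∀ u ∈ Icc a b, ∀ x ∈ Icc a b,
      |f x - taylorWithinEval f n (Icc a b) u x| ≤ C * |x - u| ^ (n + 1) := by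
  have hI := uniqueDiffOn_Icc hab
  obtain ⟨K, hK⟩ := isCompact_Icc.exists_bound_of_continuousOn
    (hf.continuousOn_iteratedDerivWithin le_rfl hI)
  have hdiff : DifferentiableOn ℝ (iteratedDerivWithin n f (Icc a b)) (Icc a b) :=
    hf.differentiableOn_iteratedDerivWithin (mod_cast n.lt_succ_self) hI
  have hK0 : 0 ≤ K := (norm_nonneg _).trans (hK a (left_mem_Icc.2 hab.le))
  refine ⟨K / n !, by positivity, fun u hu x hx => ?_⟩
  have hsub : uIcc u x ⊆ Icc a b := uIcc_subset_Icc hu hx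
  have hmvt := (convex_uIcc u x).norm_image_sub_le_of_norm_hasDerivWithin_le
    (f := fun t => taylorWithinEval f n (Icc a b) t x)
    (fun t ht => (hasDerivWithinAt_taylorWithinEval_at_Icc x hab (hsub ht) hf.of_succ
      hdiff).mono hsub)
    (C := K / n ! * |x - u| ^ n) (fun t ht => by
      rw [norm_smul, Real.norm_eq_abs ((n ! : ℝ)⁻¹ * (x - t) ^ n), abs_mul, abs_inv, abs_pow,
        Nat.abs_cast]
      calc (n ! : ℝ)⁻¹ * |x - t| ^ n * ‖iteratedDerivWithin (n + 1) f (Icc a b) t‖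
          ≤ (n ! : ℝ)⁻¹ * |x - u| ^ n * K := by
            gcongr _ * ?_ ^ n * ?_
            · exact abs_sub_right_of_mem_uIcc ht
            · exact hK t (hsub ht)
        _ = K / n ! * |x - u| ^ n := by ring)
    left_mem_uIcc right_mem_uIcc
  rw [taylorWithinEval_self, Real.norm_eq_abs, Real.norm_eq_abs] at hmvt
  rw [pow_succ, ← mul_assoc]
  exact hmvt

lemma abs_le_mul_of_abs_sub_mul_le {δ ε y K A : ℝ} {n : ℕ} (hε0 : 0 ≤ ε) (hε1 : ε ≤ 1)
    (hA : 0 ≤ A) (hy : |y| ≤ K) (h : |δ - ε * y| ≤ A * ε ^ (n + 1)) : |δ| ≤ (K + A) * ε := by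
  have hpow : ε ^ (n + 1) ≤ ε := pow_le_of_le_one hε0 hε1 (by omega)
  calc |δ| ≤ |ε * y| + |δ - ε * y| := by linarith [abs_sub_abs_le_abs_sub δ (ε * y)]
    _ ≤ ε * K + A * ε := by
      rw [abs_mul, abs_of_nonneg hε0]
      gcongr
      exact h.trans (by gcongr)
    _ = (K + A) * ε := by ring

lemma abs_sub_le_of_approx_fixedPoint {G : ℝ → ℝ} {ε L x y : ℝ} (hε : 0 ≤ ε)
    (hG : |G x - G y| ≤ L * |x - y|) :
    |x - y| ≤ ε * L * |x - y| + |x - ε * G x| + |y - ε * G y| := by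
  calc |x - y| = |ε * (G x - G y) + (x - ε * G x) - (y - ε * G y)| := by ring_nf
    _ ≤ |ε * (G x - G y)| + |x - ε * G x| + |y - ε * G y| :=
        (abs_sub _ _).trans (add_le_add (abs_add_le _ _) le_rfl)
    _ ≤ _ := by rw [abs_mul, abs_of_nonneg hε, mul_assoc]; gcongr

lemma le_mul_pow_of_le_mul_add {x ε L B K : ℝ} {n : ℕ} (hx : 0 ≤ x) (hε : 0 ≤ ε)
    (h : x ≤ ε * L * x + B * ε ^ n) (hK : x ≤ K) : x ≤ max (2 * B) (K * (2 * L) ^ n) * ε ^ n := by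
  rcases le_or_gt (ε * L) (1 / 2) with hεL | hεL
  · have : x ≤ 2 * B * ε ^ n := by nlinarith [mul_le_mul_of_nonneg_right hεL hx]
    exact this.trans (by gcongr; exact le_max_left _ _)
  · have h1 : 1 ≤ (2 * L * ε) ^ n := one_le_pow₀ (by linarith)
    calc x ≤ K * (2 * L * ε) ^ n := hK.trans (le_mul_of_one_le_right (hx.trans hK) h1)
      _ = K * (2 * L) ^ n * ε ^ n := by rw [mul_pow]; ring
      _ ≤ _ := by gcongr; exact le_max_right _ _

theorem exists_abs_sub_eval₂_le_of_X_pow_dvd_picardStep_sub {a b : ℝ} (hab : a < b)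
    {η : ℝ → ℝ} {p : ℕ} (hη : ContDiffOn ℝ (p + 1) η (Icc a b)) {A : ℝ} (hA : 0 ≤ A)
    {g T : (smoothOnSubring (Icc a b))[X]}
    (hg : ∀ u ∈ Icc a b, ∀ x ∈ Icc a b,
      g.eval₂ (smoothOnSubring.eval _ u) (x - u) = taylorWithinEval η p (Icc a b) u x)
    (hT : X ^ (p + 1) ∣ picardStep g T - T) :
    ∃ r, ∀ u ∈ Icc a b, ∀ x ∈ Icc a b, ∀ ε ∈ Ioc (0 : ℝ) 1,
      |x - u - ε * η x| ≤ A * ε ^ (p + 1) →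
        |x - u - T.eval₂ (smoothOnSubring.eval _ u) ε| ≤ r * ε ^ (p + 1) := by
  obtain ⟨D, hD⟩ := hT
  obtain ⟨Kη, hKη⟩ := isCompact_Icc.exists_bound_of_continuousOn hη.continuousOn
  obtain ⟨CT, hCT0, hCT⟩ := exists_abs_sub_taylorWithinEval_le hab hη
  obtain ⟨KD, hKD⟩ := exists_abs_eval₂_le_of_abs_le_one D
  obtain ⟨KT, hKT⟩ := exists_abs_eval₂_le_of_abs_le_one T
  obtain ⟨L, hL⟩ := exists_abs_eval₂_sub_eval₂_le g (max (b - a) KT)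
  refine ⟨max (2 * (CT * (Kη + A) ^ (p + 1) + A + KD)) ((b - a + KT) * (2 * L) ^ (p + 1)),
    fun u hu x hx ε ⟨hε0, hε1⟩ hρ => ?_⟩
  set e := smoothOnSubring.eval (Icc a b) u
  set δ := x - u
  set σ := T.eval₂ e ε
  have hε : |ε| ≤ 1 := by rwa [abs_of_pos hε0]
  have hσ : |σ| ≤ KT := hKT u hu ε hε
  have hδ : |δ| ≤ b - a := abs_sub_le_iff.2 ⟨by linarith [hx.2, hu.1], by linarith [hx.1, hu.2]⟩
  have hδε : |δ| ≤ (Kη + A) * ε := abs_le_mul_of_abs_sub_mul_le hε0.le hε1 hA (hKη x hx) hρ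
  have hδfix : |δ - ε * g.eval₂ e δ| ≤ (CT * (Kη + A) ^ (p + 1) + A) * ε ^ (p + 1) := by
    have htaylor : ε * |η x - g.eval₂ e δ| ≤ CT * (Kη + A) ^ (p + 1) * ε ^ (p + 1) := by
      rw [hg u hu x hx, mul_assoc, ← mul_pow]
      refine (mul_le_of_le_one_left (abs_nonneg _) hε1).trans ((hCT u hu x hx).trans ?_)
      gcongr
    calc |δ - ε * g.eval₂ e δ| = |(δ - ε * η x) + ε * (η x - g.eval₂ e δ)| := by ring_nf
      _ ≤ |δ - ε * η x| + |ε * (η x - g.eval₂ e δ)| := abs_add_le _ _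
      _ ≤ _ := by rw [abs_mul, abs_of_pos hε0]; linarith
  have hσfix : |σ - ε * g.eval₂ e σ| ≤ KD * ε ^ (p + 1) := by
    rw [← neg_sub, abs_neg, ← eval₂_picardStep, ← eval₂_sub, hD, eval₂_mul, eval₂_X_pow,
      abs_mul, abs_of_pos (by positivity), mul_comm]
    gcongr
    exact hKD u hu ε hε
  have hlip := hL u hu δ σ (hδ.trans (le_max_left _ _)) (hσ.trans (le_max_right _ _))
  refine le_mul_pow_of_le_mul_add (abs_nonneg _) hε0.le ?_
    ((abs_sub _ _).trans (add_le_add hδ hσ))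
  linarith [abs_sub_le_of_approx_fixedPoint (G := fun y => g.eval₂ e y) hε0.le hlip]

theorem exists_asymptotic_expansion {a b : ℝ} (hab : a < b) {η : ℝ → ℝ}
    (hη : ContDiffOn ℝ ∞ η (Icc a b)) {p : ℕ} (hp : 1 ≤ p) {A : ℝ} (hA : 0 ≤ A) :
    ∃ (c : ℕ → ℝ → ℝ) (r : ℝ), (∀ k, ContDiffOn ℝ ∞ (c k) (Icc a b)) ∧
      (∀ x, c 0 x = x) ∧ (∀ x, c 1 x = η x) ∧
      (∀ x, c 2 x = η x * derivWithin η (Icc a b) x) ∧ 0 < r ∧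
      ∀ u ∈ Icc a b, ∀ x ∈ Icc a b, ∀ ε ∈ Ioc (0 : ℝ) 1,
        |x - u - ε * η x| ≤ A * ε ^ (p + 1) →
          |x - ∑ k ∈ Finset.range (p + 1), c k u * ε ^ k| ≤ r * ε ^ (p + 1) := by
  have hI := uniqueDiffOn_Icc hab
  -- One Picard step more than the estimate needs, so that `c 2` is determined also for `p = 1`.
  set S := picardApprox (taylorWithinPoly hI hη p) (p + 1)
  have hS : X ^ (p + 2) ∣ picardStep (taylorWithinPoly hI hη p) S - S :=
    X_pow_succ_dvd_picardStep_picardApprox_sub _ _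
  have hS0 : S.coeff 0 = 0 := coeff_zero_picardApprox _ _
  set T := PowerSeries.trunc (p + 1) (S : PowerSeries (smoothOnSubring (Icc a b)))
  have hT := X_pow_dvd_picardStep_sub_of_X_pow_dvd_sub ((pow_dvd_pow X (by omega)).trans hS)
    (X_pow_dvd_trunc_sub S (p + 1))
  obtain ⟨r, hr⟩ := exists_abs_sub_eval₂_le_of_X_pow_dvd_picardStep_sub hab
    (hη.of_le (mod_cast le_top)) hA (fun u _ x _ => eval₂_taylorWithinPoly hI hη p u x) hT
  set c : ℕ → ℝ → ℝ := fun k => if k = 0 then id else S.coeff k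
  have hsum (u ε : ℝ) : ∑ k ∈ Finset.range (p + 1), c k u * ε ^ k =
      u + T.eval₂ (smoothOnSubring.eval _ u) ε := by
    rw [PowerSeries.eval₂_trunc_eq_sum_range, Finset.sum_range_succ', Finset.sum_range_succ' _ p]
    simp [c, Polynomial.coeff_coe, hS0, add_comm]
  refine ⟨c, max r 1, fun k => ?_, fun x => rfl, fun x => ?_, fun x => ?_, by positivity,
    fun u hu x hx ε hε hρ => ?_⟩
  · simp only [c]
    split_ifs
    exacts [contDiffOn_id, (S.coeff k).2]
  · simp only [c, one_ne_zero, if_false]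
    rw [coeff_one_of_X_pow_dvd_picardStep_sub hS0
      ((pow_dvd_pow X (by omega)).trans hS), coeff_taylorWithinPoly hI hη p (Nat.zero_le p)]
    simp
  · simp only [c, OfNat.ofNat_ne_zero, if_false]
    rw [coeff_two_of_X_pow_dvd_picardStep_sub hS0
      ((pow_dvd_pow X (by omega)).trans hS), Subring.coe_mul, Pi.mul_apply,
      coeff_taylorWithinPoly hI hη p (Nat.zero_le p), coeff_taylorWithinPoly hI hη p hp]
    simp [iteratedDerivWithin_one, mul_comm]
  · rw [hsum, ← sub_sub]
    have := hε.1
    exact (hr u hu x hx ε hε hρ).trans (by gcongr; exact le_max_left _ _)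

theorem stmt4 (s : ℝ) (hs : 0 < s) (J : Set (ℕ × ℕ))
    (hJ : ∀ nj ∈ J, 1 ≤ nj.2 ∧ nj.2 ≤ nj.1)
    (eta : ℝ → ℝ) (heta : ∀ m : ℕ, ContDiffOn ℝ m eta (Set.Icc 0 Real.pi))
    (p : ℕ) (hp : 1 ≤ p) (A : ℝ) (hA : 0 < A)
    (rho : ℕ → ℕ → ℝ → ℝ)
    (hrho : ∀ nj ∈ J, ∀ x ∈ Set.Icc (0 : ℝ) Real.pi,
      |rho nj.1 nj.2 x| ≤ A / ((nj.1 : ℝ) + s) ^ (p + 1))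
    (phi : ℕ → ℕ → ℝ)
    (hphi : ∀ nj ∈ J,
      phi nj.1 nj.2 ∈ Set.Icc (0 : ℝ) Real.pi ∧
      phi nj.1 nj.2 = (nj.2 : ℝ) * Real.pi / ((nj.1 : ℝ) + s)
        + eta (phi nj.1 nj.2) / ((nj.1 : ℝ) + s) + rho nj.1 nj.2 (phi nj.1 nj.2) ∧
      ∀ x ∈ Set.Icc (0 : ℝ) Real.pi,
        x = (nj.2 : ℝ) * Real.pi / ((nj.1 : ℝ) + s)
          + eta x / ((nj.1 : ℝ) + s) + rho nj.1 nj.2 x → x = phi nj.1 nj.2) :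
    ∃ (c : ℕ → ℝ → ℝ) (r : ℝ),
      (∀ k ≤ p, ∀ m : ℕ, ContDiffOn ℝ m (c k) (Set.Icc 0 Real.pi)) ∧
      (∀ x ∈ Set.Icc (0 : ℝ) Real.pi, c 0 x = x) ∧
      (∀ x ∈ Set.Icc (0 : ℝ) Real.pi, c 1 x = eta x) ∧
      (∀ x ∈ Set.Icc (0 : ℝ) Real.pi,
        c 2 x = eta x * derivWithin eta (Set.Icc 0 Real.pi) x) ∧
      0 < r ∧
      ∀ nj ∈ J,
        |phi nj.1 nj.2 - ∑ k ∈ Finset.range (p + 1),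
            c k ((nj.2 : ℝ) * Real.pi / ((nj.1 : ℝ) + s)) / ((nj.1 : ℝ) + s) ^ k|
          ≤ r / ((nj.1 : ℝ) + s) ^ (p + 1) := by
  obtain ⟨c, r, hc, hc0, hc1, hc2, hr, hexp⟩ :=
    exists_asymptotic_expansion pi_pos (contDiffOn_infty.2 heta) hp hA.le
  refine ⟨c, r, fun k _ => contDiffOn_infty.1 (hc k), fun x _ => hc0 x, fun x _ => hc1 x,
    fun x _ => hc2 x, hr, fun nj hnj => ?_⟩
  obtain ⟨hj1, hjn⟩ := hJ nj hnj
  obtain ⟨hφ, hφeq, -⟩ := hphi nj hnj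
  have hN : 1 < (nj.1 : ℝ) + s := by
    have : (1 : ℝ) ≤ nj.1 := by exact_mod_cast hj1.trans hjn
    linarith
  have hu : (nj.2 : ℝ) * π / (nj.1 + s) ∈ Icc 0 π := by
    refine ⟨by positivity, (div_le_iff₀ (by linarith)).2 ?_⟩
    have : (nj.2 : ℝ) ≤ nj.1 := by exact_mod_cast hjn
    nlinarith [pi_pos]
  have hε : ((nj.1 : ℝ) + s)⁻¹ ∈ Ioc 0 1 := ⟨by positivity, inv_le_one_of_one_le₀ hN.le⟩
  have hρ := hrho nj hnj _ hφ
  simp only [div_eq_mul_inv, ← inv_pow] at hρ hφeq hu ⊢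
  refine hexp _ hu _ hφ _ hε (le_of_eq_of_le (congrArg abs ?_) hρ)
  linear_combination hφeq
end

section
/- Suppose η : [0,π] → ℝ is infinitely differentiable, p is a positive integer, A > 0, and {ρ_{n,j}}_{(n,j)∈J} is a family of functions from [0,π] to ℝ with sup_{x∈[0,π]} |ρ_{n,j}(x)| ≤ A/(n+s)^{p+1} for all (n,j) ∈ J. Suppose further that for each (n,j) ∈ J the equation x = u_{n,j} + η(x)/(n+s) + ρ_{n,j}(x) has a unique solution φ_{n,j} in [0,π]. Let g : ℝ → ℝ be an infinitely differentiable, 2π-periodic, even function that is strictly increasing on [0,π], and set λ_{n,j} = g(φ_{n,j}). Then there exist infinitely differentiable functions d_0, …, d_p : [0,π] → ℝ, with d_0 equal to the restriction of g to [0,π] and d_1 = g′·η, and a constant R_p > 0 such that |λ_{n,j} − Σ_{k=0}^{p} d_k(u_{n,j})/(n+s)^k| ≤ R_p/(n+s)^{p+1} for all (n,j) ∈ J. -/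
/-!
Write `ε = 1 / (n + s)` and `δ = φ - u`. The equation for `φ` says
`δ = ε η(u + δ) + O(ε^(p+1))`. Replacing `η(u + δ)` by its Taylor polynomial at `u` and iterating
(Picard iteration started at `0`) gives polynomials in `ε`, with coefficients smooth in `u`, that
approximate `δ` up to `O(ε^(m+1))` after `m ≤ p` steps. Substituting the `p`-th iterate into the
Taylor polynomial of `g` at `u` and truncating at degree `p` gives the `d_k`. The iterates have no
constant term and linear coefficient `η(u)`, which identifies `d_0 = g` and `d_1 = g' η`. All
error terms are uniform in `(n, j)` because every coefficient is continuous on `[0, π]`.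
-/

open Real Set Polynomial Asymptotics Filter
open scoped ContDiff

variable {ι : Type*} {l : Filter ι}

theorem Asymptotics.IsBigO.pow_sub_pow {x y : ι → ℝ} (hx : x =O[l] fun _ => (1 : ℝ))
    (hy : y =O[l] fun _ => (1 : ℝ)) (n : ℕ) :
    (fun i => x i ^ n - y i ^ n) =O[l] fun i => x i - y i := by
  have hsum : (fun i => ∑ k ∈ Finset.range n, x i ^ k * y i ^ (n - 1 - k)) =O[l]
      fun _ => (1 : ℝ) :=
    IsBigO.fun_sum fun k _ => by simpa using (hx.pow k).mul (hy.pow (n - 1 - k))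
  simpa [geom_sum₂_mul] using hsum.mul (isBigO_refl (fun i => x i - y i) l)

theorem Asymptotics.isBigO_pow_pow_of_le {ε : ι → ℝ} (hε : ∀ᶠ i in l, ε i ∈ Icc 0 1)
    {k m : ℕ} (hkm : k ≤ m) : (fun i => ε i ^ m) =O[l] fun i => ε i ^ k :=
  IsBigO.of_bound 1 <| hε.mono fun i hi => by
    simpa [abs_of_nonneg hi.1] using pow_le_pow_of_le_one hi.1 hi.2 hkm

theorem ContinuousOn.isBigO_one_comp {F : ℝ → ℝ} {K : Set ℝ} (hF : ContinuousOn F K)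
    (hK : IsCompact K) {x : ι → ℝ} (hx : ∀ᶠ i in l, x i ∈ K) :
    (fun i => F (x i)) =O[l] fun _ => (1 : ℝ) :=
  (hF.isBigO_principal hK (by norm_num)).comp_tendsto (tendsto_principal.2 hx)

theorem ContDiffOn.contDiffOn_iteratedDerivWithin {f : ℝ → ℝ} {s : Set ℝ}
    (hf : ContDiffOn ℝ ∞ f s) (hs : UniqueDiffOn ℝ s) :
    ∀ k, ContDiffOn ℝ ∞ (iteratedDerivWithin k f s) s
  | 0 => by simpa
  | k + 1 => by
    rw [iteratedDerivWithin_succ]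
    exact ((contDiffOn_infty_iff_derivWithin hs).1
      (hf.contDiffOn_iteratedDerivWithin hs k)).2

theorem ContDiffOn.contDiffOn_taylorCoeffWithin {f : ℝ → ℝ} {s : Set ℝ}
    (hf : ContDiffOn ℝ ∞ f s) (hs : UniqueDiffOn ℝ s) (k : ℕ) :
    ContDiffOn ℝ ∞ (taylorCoeffWithin f k s) s :=
  (hf.contDiffOn_iteratedDerivWithin hs k).const_smul _

section Taylor

variable {f : ℝ → ℝ} {a b : ℝ} {n : ℕ}

theorem abs_sub_taylorWithinEval_le (hab : a < b) (hf : ContDiffOn ℝ (n + 1) f (Icc a b))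
    {C : ℝ} (hC : ∀ y ∈ Icc a b, |iteratedDerivWithin (n + 1) f (Icc a b) y| ≤ C) {u x : ℝ}
    (hu : u ∈ Icc a b) (hx : x ∈ Icc a b) :
    |f x - taylorWithinEval f n (Icc a b) u x| ≤ C * |x - u| ^ (n + 1) := by
  have hf' : DifferentiableOn ℝ (iteratedDerivWithin n f (Icc a b)) (Icc a b) :=
    hf.differentiableOn_iteratedDerivWithin (mod_cast n.lt_succ_self) (uniqueDiffOn_Icc hab)
  have hsub : uIcc u x ⊆ Icc a b := uIcc_subset_Icc hu hx
  -- mean value theorem in the base point of the Taylor polynomial, which moves from `u` to `x`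
  have hderiv : ∀ t ∈ uIcc u x, HasDerivWithinAt (fun y => taylorWithinEval f n (Icc a b) y x)
      (((n.factorial : ℝ)⁻¹ * (x - t) ^ n) • iteratedDerivWithin (n + 1) f (Icc a b) t)
      (uIcc u x) t := fun t ht =>
    (hasDerivWithinAt_taylorWithinEval_at_Icc x hab (hsub ht) hf.of_succ hf').mono hsub
  have hbound : ∀ t ∈ uIcc u x,
      ‖((n.factorial : ℝ)⁻¹ * (x - t) ^ n) • iteratedDerivWithin (n + 1) f (Icc a b) t‖ ≤
        |x - u| ^ n * C := by
    intro t ht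
    rw [norm_smul, norm_mul, norm_pow, norm_inv, Real.norm_natCast, Real.norm_eq_abs,
      Real.norm_eq_abs]
    refine mul_le_mul ?_ (hC t (hsub ht)) (abs_nonneg _) (by positivity)
    calc (n.factorial : ℝ)⁻¹ * |x - t| ^ n ≤ 1 * |x - u| ^ n := by
          refine mul_le_mul (inv_le_one_of_one_le₀ (mod_cast n.factorial_pos))
            (pow_le_pow_left₀ (abs_nonneg _) (abs_sub_right_of_mem_uIcc ht) n) (by positivity)
            zero_le_one
      _ = |x - u| ^ n := one_mul _
  have := (convex_uIcc u x).norm_image_sub_le_of_norm_hasDerivWithin_le hderiv hbound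
    left_mem_uIcc right_mem_uIcc
  rw [taylorWithinEval_self, Real.norm_eq_abs, Real.norm_eq_abs] at this
  calc _ ≤ |x - u| ^ n * C * |x - u| := this
    _ = C * |x - u| ^ (n + 1) := by ring

theorem isBigO_sub_taylorWithinEval (hab : a < b) (hf : ContDiffOn ℝ (n + 1) f (Icc a b))
    {u x : ι → ℝ} (hu : ∀ᶠ i in l, u i ∈ Icc a b) (hx : ∀ᶠ i in l, x i ∈ Icc a b) :
    (fun i => f (x i) - taylorWithinEval f n (Icc a b) (u i) (x i)) =O[l]
      fun i => (x i - u i) ^ (n + 1) := by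
  obtain ⟨C, hC⟩ := isCompact_Icc.exists_bound_of_continuousOn
    (hf.continuousOn_iteratedDerivWithin le_rfl (uniqueDiffOn_Icc hab))
  refine IsBigO.of_bound C ?_
  filter_upwards [hu, hx] with i hui hxi
  simpa [abs_pow] using
    abs_sub_taylorWithinEval_le hab hf (fun y hy => by simpa using hC y hy) hui hxi

theorem isBigO_sub_sum_taylorCoeffWithin_mul_pow (hab : a < b)
    (hf : ContDiffOn ℝ (n + 1) f (Icc a b)) {u x y ε : ι → ℝ} {e : ℕ} (he : e ≤ n + 1)
    (hu : ∀ᶠ i in l, u i ∈ Icc a b) (hx : ∀ᶠ i in l, x i ∈ Icc a b)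
    (hε : ∀ᶠ i in l, ε i ∈ Icc 0 1) (hxu : (fun i => x i - u i) =O[l] ε)
    (hy : (fun i => x i - u i - y i) =O[l] fun i => ε i ^ e) :
    (fun i => f (x i) - ∑ k ∈ Finset.range (n + 1),
      taylorCoeffWithin f k (Icc a b) (u i) * y i ^ k) =O[l] fun i => ε i ^ e := by
  have hε1 : ε =O[l] fun _ => (1 : ℝ) := by simpa using isBigO_pow_pow_of_le hε zero_le_one
  have hxu1 := hxu.trans hε1
  have hy1 : y =O[l] fun _ => (1 : ℝ) := by
    have := hxu1.sub (hy.trans (by simpa using isBigO_pow_pow_of_le hε (Nat.zero_le e)))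
    simpa using this
  have htaylor : (fun i => f (x i) - taylorWithinEval f n (Icc a b) (u i) (x i)) =O[l]
      fun i => ε i ^ e :=
    (isBigO_sub_taylorWithinEval hab hf hu hx).trans
      ((hxu.pow (n + 1)).trans (isBigO_pow_pow_of_le hε he))
  have hsubst : (fun i => ∑ k ∈ Finset.range (n + 1),
      taylorCoeffWithin f k (Icc a b) (u i) * ((x i - u i) ^ k - y i ^ k)) =O[l]
      fun i => ε i ^ e := by
    refine IsBigO.fun_sum fun k hk => ?_
    have hc : ContinuousOn (taylorCoeffWithin f k (Icc a b)) (Icc a b) :=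
      (hf.continuousOn_iteratedDerivWithin (mod_cast (Finset.mem_range.1 hk).le)
        (uniqueDiffOn_Icc hab)).const_smul ((k.factorial : ℝ)⁻¹)
    simpa using (hc.isBigO_one_comp isCompact_Icc hu).mul ((hxu1.pow_sub_pow hy1 k).trans hy)
  refine (htaylor.add hsubst).congr_left fun i => ?_
  have hT : taylorWithinEval f n (Icc a b) (u i) (x i) = ∑ k ∈ Finset.range (n + 1),
      taylorCoeffWithin f k (Icc a b) (u i) * (x i - u i) ^ k := by
    simp only [taylor_within_apply, taylorCoeffWithin, smul_eq_mul]
    exact Finset.sum_congr rfl fun k _ => by ring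
  simp only [hT, mul_sub, Finset.sum_sub_distrib]
  ring

end Taylor

structure IsSmoothPolyFamily (s : Set ℝ) (P : ℝ → ℝ[X]) : Prop where
  natDegree_le : ∃ D, ∀ u, (P u).natDegree ≤ D
  contDiffOn_coeff : ∀ k, ContDiffOn ℝ ∞ (fun u => (P u).coeff k) s

namespace IsSmoothPolyFamily

variable {s : Set ℝ} {P Q : ℝ → ℝ[X]}

theorem const (R : ℝ[X]) : IsSmoothPolyFamily s fun _ => R :=
  ⟨⟨R.natDegree, fun _ => le_rfl⟩, fun _ => contDiffOn_const⟩

theorem C {f : ℝ → ℝ} (hf : ContDiffOn ℝ ∞ f s) : IsSmoothPolyFamily s fun u => C (f u) := by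
  refine ⟨⟨0, fun u => (natDegree_C _).le⟩, fun k => ?_⟩
  rcases eq_or_ne k 0 with rfl | hk
  · simpa using hf
  · simpa [coeff_C, hk] using contDiffOn_const

theorem mul (hP : IsSmoothPolyFamily s P) (hQ : IsSmoothPolyFamily s Q) :
    IsSmoothPolyFamily s fun u => P u * Q u := by
  obtain ⟨D, hD⟩ := hP.natDegree_le
  obtain ⟨E, hE⟩ := hQ.natDegree_le
  refine ⟨⟨D + E, fun u => natDegree_mul_le.trans (add_le_add (hD u) (hE u))⟩, fun k => ?_⟩
  simp only [coeff_mul]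
  exact ContDiffOn.sum fun ij _ => (hP.contDiffOn_coeff ij.1).mul (hQ.contDiffOn_coeff ij.2)

theorem pow (hP : IsSmoothPolyFamily s P) : ∀ n : ℕ, IsSmoothPolyFamily s fun u => P u ^ n
  | 0 => by simpa using const 1
  | n + 1 => by simpa [pow_succ] using (hP.pow n).mul hP

theorem sum {κ : Type*} (t : Finset κ) {P : κ → ℝ → ℝ[X]}
    (hP : ∀ j ∈ t, IsSmoothPolyFamily s (P j)) :
    IsSmoothPolyFamily s fun u => ∑ j ∈ t, P j u := by
  classical
  induction t using Finset.induction_on with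
  | empty => simpa using const 0
  | insert j t hj ih =>
    simp only [Finset.sum_insert hj]
    have hPj := hP j (Finset.mem_insert_self j t)
    have ht := ih fun i hi => hP i (Finset.mem_insert_of_mem hi)
    obtain ⟨D, hD⟩ := hPj.natDegree_le
    obtain ⟨E, hE⟩ := ht.natDegree_le
    refine ⟨⟨max D E, fun u => natDegree_add_le_of_degree_le ?_ ?_⟩, fun k => ?_⟩
    · exact (hD u).trans (le_max_left D E)
    · exact (hE u).trans (le_max_right D E)
    · simpa only [coeff_add] using (hPj.contDiffOn_coeff k).add (ht.contDiffOn_coeff k)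

theorem isBigO_eval_sub_sum {K : Set ℝ} (hP : IsSmoothPolyFamily K P) (hK : IsCompact K)
    {u ε : ι → ℝ} (hu : ∀ᶠ i in l, u i ∈ K) (hε : ∀ᶠ i in l, ε i ∈ Icc 0 1) (p : ℕ) :
    (fun i => (P (u i)).eval (ε i) - ∑ k ∈ Finset.range (p + 1), (P (u i)).coeff k * ε i ^ k)
      =O[l] fun i => ε i ^ (p + 1) := by
  obtain ⟨D, hD⟩ := hP.natDegree_le
  have hsplit : ∀ i, (P (u i)).eval (ε i) -
      ∑ k ∈ Finset.range (p + 1), (P (u i)).coeff k * ε i ^ k =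
      ∑ k ∈ Finset.Ico (p + 1) (D + p + 2), (P (u i)).coeff k * ε i ^ k := fun i => by
    rw [eval_eq_sum_range' (n := D + p + 2) (by linarith [hD (u i)]),
      Finset.sum_Ico_eq_sub _ (by omega)]
  simp only [hsplit]
  refine IsBigO.fun_sum fun k hk => ?_
  have hc := ((hP.contDiffOn_coeff k).continuousOn.isBigO_one_comp hK hu)
  simpa using hc.mul (isBigO_pow_pow_of_le hε (Finset.mem_Ico.1 hk).1)

end IsSmoothPolyFamily

noncomputable def taylorSubst (f : ℝ → ℝ) (s : Set ℝ) (n : ℕ) (Q : ℝ → ℝ[X]) (u : ℝ) : ℝ[X] :=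
  ∑ k ∈ Finset.range (n + 1), C (taylorCoeffWithin f k s u) * Q u ^ k

/-- `(picardPoly η s n m u).eval ε` is the `m`-th Picard iterate, started at `0`, of
`δ ↦ ε * T δ`, where `T` is the degree-`n` Taylor polynomial of `η` at `u`. -/
noncomputable def picardPoly (η : ℝ → ℝ) (s : Set ℝ) (n : ℕ) : ℕ → ℝ → ℝ[X]
  | 0 => 0
  | m + 1 => fun u => X * taylorSubst η s n (picardPoly η s n m) u

section Subst

variable {f η : ℝ → ℝ} {s : Set ℝ} {n : ℕ}

theorem eval_taylorSubst (Q : ℝ → ℝ[X]) (u ε : ℝ) :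
    (taylorSubst f s n Q u).eval ε =
      ∑ k ∈ Finset.range (n + 1), taylorCoeffWithin f k s u * (Q u).eval ε ^ k := by
  simp [taylorSubst, eval_finsetSum]

theorem eval_picardPoly_succ (m : ℕ) (u ε : ℝ) :
    (picardPoly η s n (m + 1) u).eval ε =
      ε * ∑ k ∈ Finset.range (n + 1),
        taylorCoeffWithin η k s u * (picardPoly η s n m u).eval ε ^ k := by
  simp [picardPoly, eval_taylorSubst]

theorem coeff_zero_taylorSubst {Q : ℝ → ℝ[X]} {u : ℝ} (hQ : (Q u).coeff 0 = 0) :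
    (taylorSubst f s n Q u).coeff 0 = f u := by
  rw [coeff_zero_eq_eval_zero, eval_taylorSubst, Finset.sum_range_succ',
    ← coeff_zero_eq_eval_zero, hQ]
  simp [taylorCoeffWithin]

theorem coeff_zero_picardPoly (m : ℕ) (u : ℝ) : (picardPoly η s n m u).coeff 0 = 0 := by
  cases m <;> simp [picardPoly]

theorem coeff_one_taylorSubst_picardPoly (hn : 1 ≤ n) {m : ℕ} (hm : 1 ≤ m) (u : ℝ) :
    (taylorSubst f s n (picardPoly η s n m) u).coeff 1 = derivWithin f s u * η u := by
  obtain ⟨m, rfl⟩ : ∃ k, m = k + 1 := ⟨m - 1, by omega⟩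
  have hη : (taylorSubst η s n (picardPoly η s n m) u).coeff 0 = η u :=
    coeff_zero_taylorSubst (coeff_zero_picardPoly m u)
  change (∑ k ∈ Finset.range (n + 1), C (taylorCoeffWithin f k s u) *
    (X * taylorSubst η s n (picardPoly η s n m) u) ^ k).coeff 1 = _
  simp only [finsetSum_coeff, coeff_C_mul, mul_pow, coeff_X_pow_mul']
  rw [Finset.sum_eq_single 1]
  · simp [hη, taylorCoeffWithin, iteratedDerivWithin_one]
  · intro k _ hk
    rcases k with _ | _ | k <;> simp_all [coeff_one]
  · simp; omega

theorem IsSmoothPolyFamily.taylorSubst (hf : ContDiffOn ℝ ∞ f s) (hs : UniqueDiffOn ℝ s)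
    {Q : ℝ → ℝ[X]} (hQ : IsSmoothPolyFamily s Q) :
    IsSmoothPolyFamily s (taylorSubst f s n Q) :=
  IsSmoothPolyFamily.sum _ fun k _ =>
    (IsSmoothPolyFamily.C (hf.contDiffOn_taylorCoeffWithin hs k)).mul (hQ.pow k)

theorem IsSmoothPolyFamily.picardPoly (hη : ContDiffOn ℝ ∞ η s) (hs : UniqueDiffOn ℝ s) :
    ∀ m, IsSmoothPolyFamily s (picardPoly η s n m)
  | 0 => IsSmoothPolyFamily.const 0
  | m + 1 => (IsSmoothPolyFamily.const X).mul
      ((IsSmoothPolyFamily.picardPoly hη hs m).taylorSubst hη hs)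

end Subst

structure IsApproxSolution (l : Filter ι) (η : ℝ → ℝ) (a b : ℝ) (p : ℕ) (u ε φ : ι → ℝ) :
    Prop where
  base_mem : ∀ᶠ i in l, u i ∈ Icc a b
  mem : ∀ᶠ i in l, φ i ∈ Icc a b
  eps_mem : ∀ᶠ i in l, ε i ∈ Icc 0 1
  isBigO : (fun i => φ i - u i - ε i * η (φ i)) =O[l] fun i => ε i ^ (p + 1)

namespace IsApproxSolution

variable {η : ℝ → ℝ} {a b : ℝ} {p : ℕ} {u ε φ : ι → ℝ}

theorem isBigO_sub (h : IsApproxSolution l η a b p u ε φ) (hη : ContinuousOn η (Icc a b)) :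
    (fun i => φ i - u i) =O[l] ε := by
  have hr := h.isBigO.trans
    (by simpa using isBigO_pow_pow_of_le h.eps_mem (Nat.le_add_left 1 p))
  have hη' : (fun i => ε i * η (φ i)) =O[l] ε := by
    simpa using (isBigO_refl ε l).mul (hη.isBigO_one_comp isCompact_Icc h.mem)
  simpa using hr.add hη'

theorem isBigO_sub_eval_picardPoly (h : IsApproxSolution l η a b p u ε φ) (hab : a < b)
    (hη : ContDiffOn ℝ ∞ η (Icc a b)) :
    ∀ m ≤ p, (fun i => φ i - u i - (picardPoly η (Icc a b) p m (u i)).eval (ε i)) =O[l]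
      fun i => ε i ^ (m + 1)
  | 0, _ => by simpa [picardPoly] using h.isBigO_sub hη.continuousOn
  | m + 1, hm => by
    have hη' := isBigO_sub_sum_taylorCoeffWithin_mul_pow hab
      (by exact_mod_cast contDiffOn_infty.1 hη (p + 1)) (by omega) h.base_mem h.mem h.eps_mem
      (h.isBigO_sub hη.continuousOn) (h.isBigO_sub_eval_picardPoly hab hη m (by omega))
    have hr := h.isBigO.trans (isBigO_pow_pow_of_le h.eps_mem (by omega : m + 1 + 1 ≤ p + 1))
    have hεη := ((isBigO_refl ε l).mul hη').congr_right fun i =>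
      (pow_succ' (ε i) (m + 1)).symm
    refine (hr.add hεη).congr_left fun i => ?_
    rw [eval_picardPoly_succ]
    ring

theorem isBigO_sub_sum_coeff_taylorSubst (h : IsApproxSolution l η a b p u ε φ) (hab : a < b)
    (hη : ContDiffOn ℝ ∞ η (Icc a b)) {g : ℝ → ℝ} (hg : ContDiffOn ℝ ∞ g (Icc a b)) :
    (fun i => g (φ i) - ∑ k ∈ Finset.range (p + 1),
      (taylorSubst g (Icc a b) p (picardPoly η (Icc a b) p p) (u i)).coeff k * ε i ^ k) =O[l]
      fun i => ε i ^ (p + 1) := by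
  have hs := uniqueDiffOn_Icc hab
  have hg' := isBigO_sub_sum_taylorCoeffWithin_mul_pow hab
    (by exact_mod_cast contDiffOn_infty.1 hg (p + 1)) le_rfl h.base_mem h.mem h.eps_mem
    (h.isBigO_sub hη.continuousOn) (h.isBigO_sub_eval_picardPoly hab hη p le_rfl)
  have htail := ((IsSmoothPolyFamily.picardPoly (n := p) hη hs p).taylorSubst (n := p) hg hs
    ).isBigO_eval_sub_sum isCompact_Icc h.base_mem h.eps_mem p
  refine (hg'.add htail).congr_left fun i => ?_
  rw [eval_taylorSubst]
  ring

end IsApproxSolution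

theorem natCast_mul_pi_div_mem_Icc {j n : ℕ} {s : ℝ} (hs : 0 ≤ s) (hjn : j ≤ n) :
    (j : ℝ) * π / (n + s) ∈ Icc 0 π := by
  refine ⟨by positivity, div_le_of_le_mul₀ (by positivity) pi_pos.le ?_⟩
  have : (j : ℝ) ≤ n := by exact_mod_cast hjn
  nlinarith [pi_pos]

theorem inv_natCast_add_mem_Icc {n : ℕ} {s : ℝ} (hs : 0 ≤ s) (hn : 1 ≤ n) :
    ((n : ℝ) + s)⁻¹ ∈ Icc 0 1 := by
  have : (1 : ℝ) ≤ n := by exact_mod_cast hn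
  exact ⟨by positivity, inv_le_one_of_one_le₀ (by linarith)⟩

theorem stmt5_general (s : ℝ) (hs : 0 < s) (J : Set (ℕ × ℕ))
    (hJ : ∀ nj ∈ J, 1 ≤ nj.2 ∧ nj.2 ≤ nj.1)
    (eta : ℝ → ℝ) (heta : ∀ m : ℕ, ContDiffOn ℝ m eta (Set.Icc 0 Real.pi))
    (p : ℕ) (hp : 1 ≤ p) (A : ℝ)
    (rho : ℕ → ℕ → ℝ → ℝ)
    (hrho : ∀ nj ∈ J, ∀ x ∈ Set.Icc (0 : ℝ) Real.pi,
      |rho nj.1 nj.2 x| ≤ A / ((nj.1 : ℝ) + s) ^ (p + 1))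
    (phi : ℕ → ℕ → ℝ)
    (hphi : ∀ nj ∈ J,
      phi nj.1 nj.2 ∈ Set.Icc (0 : ℝ) Real.pi ∧
      phi nj.1 nj.2 = (nj.2 : ℝ) * Real.pi / ((nj.1 : ℝ) + s)
        + eta (phi nj.1 nj.2) / ((nj.1 : ℝ) + s) + rho nj.1 nj.2 (phi nj.1 nj.2) ∧
      ∀ x ∈ Set.Icc (0 : ℝ) Real.pi,
        x = (nj.2 : ℝ) * Real.pi / ((nj.1 : ℝ) + s)
          + eta x / ((nj.1 : ℝ) + s) + rho nj.1 nj.2 x → x = phi nj.1 nj.2)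
    (g : ℝ → ℝ) (hg : ∀ m : ℕ, ContDiff ℝ m g)
    (lam : ℕ → ℕ → ℝ)
    (hlam : ∀ nj ∈ J, lam nj.1 nj.2 = g (phi nj.1 nj.2)) :
    ∃ (d : ℕ → ℝ → ℝ) (R : ℝ),
      (∀ k ≤ p, ∀ m : ℕ, ContDiffOn ℝ m (d k) (Set.Icc 0 Real.pi)) ∧
      (∀ x ∈ Set.Icc (0 : ℝ) Real.pi, d 0 x = g x) ∧
      (∀ x ∈ Set.Icc (0 : ℝ) Real.pi, d 1 x = deriv g x * eta x) ∧
      0 < R ∧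
      ∀ nj ∈ J,
        |lam nj.1 nj.2 - ∑ k ∈ Finset.range (p + 1),
            d k ((nj.2 : ℝ) * Real.pi / ((nj.1 : ℝ) + s)) / ((nj.1 : ℝ) + s) ^ k|
          ≤ R / ((nj.1 : ℝ) + s) ^ (p + 1) := by
  have hI := uniqueDiffOn_Icc pi_pos
  have hη : ContDiffOn ℝ ∞ eta (Icc 0 π) := contDiffOn_infty.2 heta
  have hgI : ContDiffOn ℝ ∞ g (Icc 0 π) := contDiffOn_infty.2 fun m => (hg m).contDiffOn
  have hε : ∀ nj ∈ J, ((nj.1 : ℝ) + s)⁻¹ ∈ Icc 0 1 := fun nj hnj =>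
    inv_natCast_add_mem_Icc hs.le ((hJ nj hnj).1.trans (hJ nj hnj).2)
  have hsol : IsApproxSolution (𝓟 J) eta 0 π p (fun nj => nj.2 * π / (nj.1 + s))
      (fun nj => ((nj.1 : ℝ) + s)⁻¹) (fun nj => phi nj.1 nj.2) := by
    refine ⟨eventually_principal.2 fun nj hnj => natCast_mul_pi_div_mem_Icc hs.le (hJ nj hnj).2,
      eventually_principal.2 fun nj hnj => (hphi nj hnj).1, eventually_principal.2 hε,
      isBigO_principal.2 ⟨A, fun nj hnj => ?_⟩⟩
    obtain ⟨hφ, heq, -⟩ := hphi nj hnj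
    rw [show phi nj.1 nj.2 - nj.2 * π / (nj.1 + s) - (nj.1 + s)⁻¹ * eta (phi nj.1 nj.2) =
      rho nj.1 nj.2 (phi nj.1 nj.2) by linear_combination heq, Real.norm_eq_abs, norm_pow,
      Real.norm_eq_abs, abs_of_nonneg (hε nj hnj).1, inv_pow, ← div_eq_mul_inv]
    exact hrho nj hnj _ hφ
  obtain ⟨R, hR0, hR⟩ := (hsol.isBigO_sub_sum_coeff_taylorSubst pi_pos hη hgI).exists_pos
  refine ⟨fun k x => (taylorSubst g (Icc 0 π) p (picardPoly eta (Icc 0 π) p p) x).coeff k, R,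
    fun k _ m => contDiffOn_infty.1
      (((IsSmoothPolyFamily.picardPoly hη hI p).taylorSubst hgI hI).contDiffOn_coeff k) m,
    fun x _ => coeff_zero_taylorSubst (coeff_zero_picardPoly p x), fun x hx => ?_, hR0,
    fun nj hnj => ?_⟩
  · rw [← ((hg 1).differentiable one_ne_zero).differentiableAt.derivWithin (hI x hx)]
    exact coeff_one_taylorSubst_picardPoly hp hp x
  · have hRnj := isBigOWith_principal.1 hR nj hnj
    rw [Real.norm_eq_abs, Real.norm_eq_abs, abs_of_nonneg (pow_nonneg (hε nj hnj).1 _)] at hRnj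
    simpa only [hlam nj hnj, div_eq_mul_inv, inv_pow] using hRnj

theorem stmt5 (s : ℝ) (hs : 0 < s) (J : Set (ℕ × ℕ))
    (hJ : ∀ nj ∈ J, 1 ≤ nj.2 ∧ nj.2 ≤ nj.1)
    (eta : ℝ → ℝ) (heta : ∀ m : ℕ, ContDiffOn ℝ m eta (Set.Icc 0 Real.pi))
    (p : ℕ) (hp : 1 ≤ p) (A : ℝ) (hA : 0 < A)
    (rho : ℕ → ℕ → ℝ → ℝ)
    (hrho : ∀ nj ∈ J, ∀ x ∈ Set.Icc (0 : ℝ) Real.pi,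
      |rho nj.1 nj.2 x| ≤ A / ((nj.1 : ℝ) + s) ^ (p + 1))
    (phi : ℕ → ℕ → ℝ)
    (hphi : ∀ nj ∈ J,
      phi nj.1 nj.2 ∈ Set.Icc (0 : ℝ) Real.pi ∧
      phi nj.1 nj.2 = (nj.2 : ℝ) * Real.pi / ((nj.1 : ℝ) + s)
        + eta (phi nj.1 nj.2) / ((nj.1 : ℝ) + s) + rho nj.1 nj.2 (phi nj.1 nj.2) ∧
      ∀ x ∈ Set.Icc (0 : ℝ) Real.pi,
        x = (nj.2 : ℝ) * Real.pi / ((nj.1 : ℝ) + s)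
          + eta x / ((nj.1 : ℝ) + s) + rho nj.1 nj.2 x → x = phi nj.1 nj.2)
    (g : ℝ → ℝ) (hg : ∀ m : ℕ, ContDiff ℝ m g)
    (hper : Function.Periodic g (2 * Real.pi))
    (heven : ∀ x, g (-x) = g x)
    (hincr : StrictMonoOn g (Set.Icc 0 Real.pi))
    (lam : ℕ → ℕ → ℝ)
    (hlam : ∀ nj ∈ J, lam nj.1 nj.2 = g (phi nj.1 nj.2)) :
    ∃ (d : ℕ → ℝ → ℝ) (R : ℝ),
      (∀ k ≤ p, ∀ m : ℕ, ContDiffOn ℝ m (d k) (Set.Icc 0 Real.pi)) ∧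
      (∀ x ∈ Set.Icc (0 : ℝ) Real.pi, d 0 x = g x) ∧
      (∀ x ∈ Set.Icc (0 : ℝ) Real.pi, d 1 x = deriv g x * eta x) ∧
      0 < R ∧
      ∀ nj ∈ J,
        |lam nj.1 nj.2 - ∑ k ∈ Finset.range (p + 1),
            d k ((nj.2 : ℝ) * Real.pi / ((nj.1 : ℝ) + s)) / ((nj.1 : ℝ) + s) ^ k|
          ≤ R / ((nj.1 : ℝ) + s) ^ (p + 1) :=
  stmt5_general s hs J hJ eta heta p hp A rho hrho phi hphi g hg lam hlam
end

section
/- Let p ≥ 0 be an integer, let d_0, …, d_p and d̃_0, …, d̃_p be continuous real-valued functions on [0,π], let C > 0, and let {λ_{n,j}}_{(n,j)∈J} be any family of real numbers indexed by J. Suppose J asymptotically fills [0,π] by quotients and that for every (n,j) ∈ J both inequalities hold: |λ_{n,j} − Σ_{k=0}^{p} d_k(u_{n,j})/(n+s)^k| ≤ C/(n+s)^{p+1} and |λ_{n,j} − Σ_{k=0}^{p} d̃_k(u_{n,j})/(n+s)^k| ≤ C/(n+s)^{p+1}. Then d_k(x) = d̃_k(x) for every k ∈ {0,…,p} and every x ∈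 [0,π]. -/
open Real Set

/-- `J` asymptotically fills `[0,π]` by quotients (with shift `s`). -/
def AsymptoticallyFills (s : ℝ) (J : Set (ℕ × ℕ)) : Prop :=
  ∀ x ∈ Set.Icc (0 : ℝ) Real.pi, ∀ N : ℕ, 1 ≤ N → ∀ δ : ℝ, 0 < δ →
    ∃ nj ∈ J, N ≤ nj.1 ∧ |(nj.2 : ℝ) * Real.pi / ((nj.1 : ℝ) + s) - x| ≤ δ

/-! The differences `e k = d k - dt k` satisfy `|∑ k ≤ p, e k (u) / t ^ k| ≤ 2 C / t ^ (p + 1)`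
at every `u = j π / t`, `t = n + s`, with `(n, j) ∈ J`. By strong induction on `m`: once `e k`
vanishes on `[0, π]` for `k < m`, multiplying by `t ^ m` leaves `e m (u)` plus terms that are
`O(1 / t)`. Approaching any `x ∈ [0, π]` by such quotients with `n → ∞` and using continuity
of the `e k` then gives `e m x = 0`. -/

open Filter Topology Finset

theorem sum_range_add_div_pow_of_forall_lt {a : ℕ → ℝ} {t : ℝ} {m : ℕ} (n : ℕ)
    (hlow : ∀ k < m, a k = 0) :
    ∑ k ∈ range (m + n), a k / t ^ k = (∑ k ∈ range n, a (m + k) / t ^ k) / t ^ m := by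
  rw [sum_range_add, sum_eq_zero fun k hk => by rw [hlow k (mem_range.1 hk), zero_div],
    zero_add, sum_div]
  simp only [pow_add, div_div, mul_comm]

theorem abs_sum_sub_le_of_abs_sub_le {L ε : ℝ} {S : Finset ℕ} {f g : ℕ → ℝ}
    (hf : |L - ∑ k ∈ S, f k| ≤ ε) (hg : |L - ∑ k ∈ S, g k| ≤ ε) :
    |∑ k ∈ S, (f k - g k)| ≤ 2 * ε := by
  rw [sum_sub_distrib]
  calc |∑ k ∈ S, f k - ∑ k ∈ S, g k|
      ≤ |∑ k ∈ S, f k - L| + |L - ∑ k ∈ S, g k| := abs_sub_le _ _ _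
    _ ≤ 2 * ε := by rw [abs_sub_comm]; linarith

section AsymptoticExpansion

variable {ι : Type*} {l : Filter ι} [l.NeBot] {t : ι → ℝ} {a : ℕ → ι → ℝ} {A : ℕ → ℝ} {B : ℝ}

theorem eq_zero_of_abs_sum_div_pow_le {q : ℕ} (ht : Tendsto t l atTop)
    (hlim : ∀ k ≤ q, Tendsto (a k) l (𝓝 (A k)))
    (hB : ∀ᶠ i in l, |∑ k ∈ range (q + 1), a k i / t i ^ k| ≤ B / t i ^ (q + 1)) :
    A 0 = 0 := by
  have hpow (k : ℕ) : Tendsto (fun i => t i ^ (k + 1)) l atTop :=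
    (tendsto_pow_atTop k.succ_ne_zero).comp ht
  have hhigher : Tendsto (fun i => ∑ k ∈ range q, a (k + 1) i / t i ^ (k + 1)) l (𝓝 0) := by
    rw [← sum_const_zero (s := range q)]
    refine tendsto_finsetSum _ fun k hk => ?_
    simpa [div_eq_mul_inv] using
      (hlim (k + 1) (mem_range.1 hk)).mul (tendsto_inv_atTop_zero.comp (hpow k))
  have hsum : Tendsto (fun i => ∑ k ∈ range (q + 1), a k i / t i ^ k) l (𝓝 (A 0)) := by
    simp_rw [sum_range_succ']
    simpa using hhigher.add (hlim 0 (Nat.zero_le q))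
  refine tendsto_nhds_unique hsum (squeeze_zero_norm' hB ?_)
  exact tendsto_const_nhds.div_atTop (hpow q)

theorem eq_zero_of_abs_sum_div_pow_le_of_forall_lt {m p : ℕ} (ht : Tendsto t l atTop)
    (hmp : m ≤ p) (hlow : ∀ k < m, ∀ i, a k i = 0)
    (hlim : ∀ k ≤ p, Tendsto (a k) l (𝓝 (A k)))
    (hB : ∀ᶠ i in l, |∑ k ∈ range (p + 1), a k i / t i ^ k| ≤ B / t i ^ (p + 1)) :
    A m = 0 := by
  obtain ⟨q, rfl⟩ := Nat.exists_eq_add_of_le hmp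
  refine eq_zero_of_abs_sum_div_pow_le (a := fun k => a (m + k)) (A := fun k => A (m + k))
    (q := q) (B := B) ht (fun k hk => hlim _ (by omega)) ?_
  filter_upwards [hB, ht.eventually_gt_atTop 0] with i hi hti
  rw [add_assoc, sum_range_add_div_pow_of_forall_lt _ fun k hk => hlow k hk i, abs_div,
    abs_of_pos (pow_pos hti m), div_le_iff₀ (pow_pos hti m)] at hi
  calc _ ≤ B / t i ^ (m + (q + 1)) * t i ^ m := hi
    _ = B / t i ^ (q + 1) := by field_simp; ring

end AsymptoticExpansion

theorem natCast_mul_pi_div_add_mem_Icc {s : ℝ} (hs : 0 < s) {n j : ℕ} (hjn : j ≤ n) :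
    (j : ℝ) * π / (n + s) ∈ Icc 0 π := by
  have hjn' : (j : ℝ) ≤ n := by exact_mod_cast hjn
  refine ⟨by positivity, (div_le_iff₀ (by positivity)).2 ?_⟩
  nlinarith [pi_pos]

theorem AsymptoticallyFills.exists_seq_tendsto {s : ℝ} {J : Set (ℕ × ℕ)}
    (hfill : AsymptoticallyFills s J) {x : ℝ} (hx : x ∈ Icc 0 π) :
    ∃ φ : ℕ → ℕ × ℕ, (∀ i, φ i ∈ J) ∧ Tendsto (fun i => (φ i).1) atTop atTop ∧
      Tendsto (fun i => ((φ i).2 : ℝ) * π / ((φ i).1 + s)) atTop (𝓝 x) := by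
  choose φ hφJ hφn hφx using fun i : ℕ =>
    hfill x hx (i + 1) (by omega) (1 / ((i : ℝ) + 1)) (by positivity)
  refine ⟨φ, hφJ, tendsto_atTop_mono (fun i => (Nat.le_succ i).trans (hφn i)) tendsto_id, ?_⟩
  rw [tendsto_iff_norm_sub_tendsto_zero]
  exact squeeze_zero (fun _ => norm_nonneg _) hφx tendsto_one_div_add_atTop_nhds_zero_nat

theorem stmt6_general (s : ℝ) (hs : 0 < s) (J : Set (ℕ × ℕ))
    (hJ : ∀ nj ∈ J, 1 ≤ nj.2 ∧ nj.2 ≤ nj.1)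
    (hfill : AsymptoticallyFills s J)
    (p : ℕ) (d dt : ℕ → ℝ → ℝ)
    (hd : ∀ k ≤ p, ContinuousOn (d k) (Set.Icc 0 Real.pi))
    (hdt : ∀ k ≤ p, ContinuousOn (dt k) (Set.Icc 0 Real.pi))
    (C : ℝ) (lam : ℕ → ℕ → ℝ)
    (h1 : ∀ nj ∈ J,
      |lam nj.1 nj.2 - ∑ k ∈ Finset.range (p + 1),
          d k ((nj.2 : ℝ) * Real.pi / ((nj.1 : ℝ) + s)) / ((nj.1 : ℝ) + s) ^ k|
        ≤ C / ((nj.1 : ℝ) + s) ^ (p + 1))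
    (h2 : ∀ nj ∈ J,
      |lam nj.1 nj.2 - ∑ k ∈ Finset.range (p + 1),
          dt k ((nj.2 : ℝ) * Real.pi / ((nj.1 : ℝ) + s)) / ((nj.1 : ℝ) + s) ^ k|
        ≤ C / ((nj.1 : ℝ) + s) ^ (p + 1)) :
    ∀ k ≤ p, ∀ x ∈ Set.Icc (0 : ℝ) Real.pi, d k x = dt k x := by
  intro m
  induction m using Nat.strong_induction_on with
  | _ m ih =>
  intro hm x hx
  obtain ⟨φ, hφJ, hφn, hφu⟩ := hfill.exists_seq_tendsto hx
  have hu (i : ℕ) : ((φ i).2 : ℝ) * π / ((φ i).1 + s) ∈ Icc 0 π :=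
    natCast_mul_pi_div_add_mem_Icc hs (hJ _ (hφJ i)).2
  have ht : Tendsto (fun i => ((φ i).1 : ℝ) + s) atTop atTop :=
    tendsto_atTop_add_const_right _ s (tendsto_natCast_atTop_atTop.comp hφn)
  have hlim (k : ℕ) (hk : k ≤ p) : Tendsto (fun i => d k (((φ i).2 : ℝ) * π / ((φ i).1 + s)) -
      dt k (((φ i).2 : ℝ) * π / ((φ i).1 + s))) atTop (𝓝 (d k x - dt k x)) :=
    (((hd k hk).sub (hdt k hk)) x hx).tendsto.comp
      (tendsto_nhdsWithin_iff.2 ⟨hφu, .of_forall hu⟩)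
  refine sub_eq_zero.1 (eq_zero_of_abs_sum_div_pow_le_of_forall_lt ht hm
    (fun k hk i => sub_eq_zero.2 (ih k hk (by omega) _ (hu i))) hlim (B := 2 * C)
    (.of_forall fun i => ?_))
  simp_rw [sub_div]
  exact (abs_sum_sub_le_of_abs_sub_le (h1 _ (hφJ i)) (h2 _ (hφJ i))).trans_eq
    (mul_div_assoc _ _ _).symm

theorem stmt6 (s : ℝ) (hs : 0 < s) (J : Set (ℕ × ℕ))
    (hJ : ∀ nj ∈ J, 1 ≤ nj.2 ∧ nj.2 ≤ nj.1)
    (hfill : AsymptoticallyFills s J)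
    (p : ℕ) (d dt : ℕ → ℝ → ℝ)
    (hd : ∀ k ≤ p, ContinuousOn (d k) (Set.Icc 0 Real.pi))
    (hdt : ∀ k ≤ p, ContinuousOn (dt k) (Set.Icc 0 Real.pi))
    (C : ℝ) (hC : 0 < C) (lam : ℕ → ℕ → ℝ)
    (h1 : ∀ nj ∈ J,
      |lam nj.1 nj.2 - ∑ k ∈ Finset.range (p + 1),
          d k ((nj.2 : ℝ) * Real.pi / ((nj.1 : ℝ) + s)) / ((nj.1 : ℝ) + s) ^ k|
        ≤ C / ((nj.1 : ℝ) + s) ^ (p + 1))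
    (h2 : ∀ nj ∈ J,
      |lam nj.1 nj.2 - ∑ k ∈ Finset.range (p + 1),
          dt k ((nj.2 : ℝ) * Real.pi / ((nj.1 : ℝ) + s)) / ((nj.1 : ℝ) + s) ^ k|
        ≤ C / ((nj.1 : ℝ) + s) ^ (p + 1)) :
    ∀ k ≤ p, ∀ x ∈ Set.Icc (0 : ℝ) Real.pi, d k x = dt k x :=
  stmt6_general s hs J hJ hfill p d dt hd hdt C lam h1 h2
end

section
/- For every positive integer p there exists a constant C_p > 0 such that for all integers n ≥ 1 and all j with (p/2)·log(n+2) ≤ j ≤ n, one has sup_{x ∈ [u_{n,j}, u_{n,j+1}]} |ρ_{n,j}(x)| ≤ C_p/(n+2)^{p+1}. -/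
/-! For `0 < x < π` put `t = tanh ((n+2)β(x)/2)`. Then `η_{n,j}(x) = 2 arctan (a / f(x))` with
`a = t` or `a = 1/t`, while `η(x) = 2 arctan (1 / f(x))`; as `arctan` is 1-Lipschitz and
`0 < f ≤ 1`, the difference is at most `2(1 - t)/t ≤ 8 exp (-(n+2)β(x))`.
On `[u_{n,j}, u_{n,j+1}]` the lower bound `β(x) ≥ (2/π) min x 1` gives
`(n+2)β(x) ≥ min (2j) (2(n+2)/π)`: the first term beats `(n+2)^p` because `2j ≥ p log (n+2)`,
the second because an exponential beats every power. -/

open Real Set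

/-- `β(x) = 2 arsinh(sin(x/2))`. -/
noncomputable def beta (x : ℝ) : ℝ := 2 * Real.arsinh (Real.sin (x / 2))

/-- `f(x) = cos(x/2) / (1 + sin(x/2)^2)`. -/
noncomputable def fsym (x : ℝ) : ℝ := Real.cos (x / 2) / (1 + (Real.sin (x / 2)) ^ 2)

/-- `η(x) = 2 arctan(1/f(x))` for `x ∈ [0,π)`, extended continuously by `η(π) = π`. -/
noncomputable def eta (x : ℝ) : ℝ :=
  if x < Real.pi then 2 * Real.arctan (1 / fsym x) else Real.pi

/-- Hyperbolic cotangent. -/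
noncomputable def coth (x : ℝ) : ℝ := Real.cosh x / Real.sinh x

/-- `η_n^odd(x) = 2 arctan(coth((n+2)β(x)/2)/f(x))` on `(0,π)`, extended continuously
to `[0,π]` (with values `π` at both endpoints). -/
noncomputable def etaOdd (n : ℕ) (x : ℝ) : ℝ :=
  if x ≤ 0 then Real.pi
  else if x < Real.pi then 2 * Real.arctan (coth (((n : ℝ) + 2) * beta x / 2) / fsym x)
  else Real.pi

/-- `η_n^even(x) = 2 arctan(tanh((n+2)β(x)/2)/f(x))` on `(0,π)`, extended continuously
to `[0,π]` (with value `0` at `0` and `π` at `π`). -/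
noncomputable def etaEven (n : ℕ) (x : ℝ) : ℝ :=
  if x ≤ 0 then 0
  else if x < Real.pi then 2 * Real.arctan (Real.tanh (((n : ℝ) + 2) * beta x / 2) / fsym x)
  else Real.pi

/-- `η_{n,j}` is `η_n^odd` for odd `j` and `η_n^even` for even `j`. -/
noncomputable def etaNJ (n j : ℕ) : ℝ → ℝ := if Odd j then etaOdd n else etaEven n

/-- `ρ_{n,j}(x) = (η_{n,j}(x) − η(x))/(n+2)`. -/
noncomputable def rho (n j : ℕ) (x : ℝ) : ℝ := (etaNJ n j x - eta x) / ((n : ℝ) + 2)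


open scoped Nat

lemma Real.abs_arctan_sub_arctan_le (u v : ℝ) : |arctan u - arctan v| ≤ |u - v| := by
  have h := Convex.norm_image_sub_le_of_norm_hasDerivWithin_le (C := 1)
    (fun x _ => (hasDerivAt_arctan x).hasDerivWithinAt)
    (fun x _ => by
      rw [norm_of_nonneg (by positivity), div_le_one (by positivity)]
      nlinarith [sq_nonneg x])
    convex_univ (mem_univ v) (mem_univ u)
  simpa [Real.norm_eq_abs] using h

lemma Real.abs_arctan_div_sub_arctan_one_div_le {a f : ℝ} (ha : 0 < a) (hf : 0 < f) :
    |arctan (a / f) - arctan (1 / f)| ≤ f * (|a - 1| / a) := by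
  rw [← inv_div, one_div, arctan_inv_of_pos (div_pos hf ha), arctan_inv_of_pos hf]
  calc |π / 2 - arctan (f / a) - (π / 2 - arctan f)| = |arctan f - arctan (f / a)| := by
        ring_nf
    _ ≤ |f - f / a| := abs_arctan_sub_arctan_le _ _
    _ = f * (|a - 1| / a) := by
        rw [show f - f / a = f * ((a - 1) / a) by field_simp, abs_mul, abs_div, abs_of_pos hf,
          abs_of_pos ha]

lemma Real.tanh_eq_exp_two_mul (T : ℝ) : tanh T = (exp (2 * T) - 1) / (exp (2 * T) + 1) := by
  have h : exp (2 * T) = exp T * exp T := by rw [← exp_add]; ring_nf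
  rw [tanh_eq, h, exp_neg]
  field_simp

lemma Real.one_sub_tanh_div_tanh_le {T : ℝ} (hT : 1 ≤ 2 * T) :
    (1 - tanh T) / tanh T ≤ 4 * exp (-(2 * T)) := by
  have hE : 2 ≤ exp (2 * T) := by linarith [add_one_le_exp (2 * T)]
  rw [tanh_eq_exp_two_mul, exp_neg, div_le_iff₀ (div_pos (by linarith) (by linarith))]
  field_simp
  nlinarith

lemma Real.div_one_add_le_arsinh {y : ℝ} (hy : 0 ≤ y) : y / (1 + y) ≤ arsinh y := by
  have h := one_sub_inv_le_log_of_pos (show 0 < 1 + y by linarith)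
  have hsqrt : 1 ≤ √(1 + y ^ 2) := one_le_sqrt.2 (by nlinarith)
  calc y / (1 + y) = 1 - (1 + y)⁻¹ := by field_simp; ring
    _ ≤ log (1 + y) := h
    _ ≤ log (y + √(1 + y ^ 2)) := log_le_log (by linarith) (by linarith)
    _ = arsinh y := rfl

lemma beta_monotoneOn : MonotoneOn beta (Icc 0 π) := fun x hx y hy hxy =>
  mul_le_mul_of_nonneg_left (arsinh_le_arsinh.2 (sin_le_sin_of_le_of_le_pi_div_two
    (by linarith [hx.1, pi_pos]) (by linarith [hy.2]) (by linarith))) zero_le_two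

-- `sin (x/2) ≥ x/2 - x³/48 ≥ 23x/48` and `arsinh y ≥ y/(1+y) ≥ 2y/3`; then `(2/3)(23/48) > 1/π`.
lemma two_div_pi_mul_le_beta {x : ℝ} (hx0 : 0 ≤ x) (hx1 : x ≤ 1) : 2 / π * x ≤ beta x := by
  set y := sin (x / 2)
  have hy_le : y ≤ 1 / 2 := by linarith [sin_le (by linarith : 0 ≤ x / 2)]
  have hy_ge : 23 / 48 * x ≤ y := by
    rcases hx0.eq_or_lt with rfl | hx0
    · simp [y]
    · have : x / 2 - (x / 2) ^ 3 / 6 < y := sin_gt_sub_cube (by linarith)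
      nlinarith [mul_nonneg (mul_nonneg hx0.le hx0.le) (sub_nonneg.2 hx1),
        mul_nonneg hx0.le (sub_nonneg.2 hx1)]
  have hy0 : 0 ≤ y := by linarith
  have h := div_one_add_le_arsinh hy0
  have h23 : 2 / 3 * y ≤ y / (1 + y) := by
    rw [le_div_iff₀ (by linarith)]; nlinarith
  have hpi : 1 / π ≤ 23 / 72 := by
    rw [div_le_iff₀ pi_pos]; linarith [pi_gt_d2]
  calc 2 / π * x = 2 * (1 / π * x) := by ring
    _ ≤ 2 * (23 / 72 * x) := by gcongr
    _ ≤ beta x := by unfold beta; linarith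

lemma two_div_pi_mul_min_le_beta {x : ℝ} (hx0 : 0 ≤ x) (hxπ : x ≤ π) :
    2 / π * min x 1 ≤ beta x := by
  rcases le_total x 1 with hx1 | hx1
  · rw [min_eq_left hx1]; exact two_div_pi_mul_le_beta hx0 hx1
  · rw [min_eq_right hx1]
    calc 2 / π * 1 ≤ beta 1 := two_div_pi_mul_le_beta zero_le_one le_rfl
      _ ≤ beta x := beta_monotoneOn ⟨zero_le_one, by linarith [pi_gt_three]⟩ ⟨by linarith, hxπ⟩ hx1

lemma abs_sub_one_div_self_le {a t : ℝ} (ht0 : 0 < t) (ht1 : t ≤ 1) (ha : a = t ∨ a = t⁻¹) :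
    |a - 1| / a ≤ (1 - t) / t := by
  rcases ha with rfl | rfl
  · rw [abs_of_nonpos (by linarith), neg_sub]
  · rw [div_inv_eq_mul, show t⁻¹ - 1 = (1 - t) / t by field_simp, abs_div,
      abs_of_nonneg (by linarith), abs_of_pos ht0, div_mul_cancel₀ _ ht0.ne']
    exact le_div_self (by linarith) ht0 ht1

lemma fsym_pos {x : ℝ} (hx0 : 0 < x) (hxπ : x < π) : 0 < fsym x :=
  div_pos (cos_pos_of_mem_Ioo ⟨by linarith, by linarith⟩) (by positivity)

lemma fsym_le_one (x : ℝ) : fsym x ≤ 1 := by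
  unfold fsym
  rw [div_le_one (by positivity)]
  nlinarith [cos_le_one (x / 2), sq_nonneg (sin (x / 2))]

lemma etaNJ_eq_of_mem_Ioo (n j : ℕ) {x : ℝ} (hx0 : 0 < x) (hxπ : x < π) :
    ∃ a, (a = tanh ((n + 2) * beta x / 2) ∨ a = (tanh ((n + 2) * beta x / 2))⁻¹) ∧
      etaNJ n j x = 2 * arctan (a / fsym x) := by
  rw [etaNJ]
  split_ifs
  · rw [etaOdd, if_neg hx0.not_ge, if_pos hxπ, coth, tanh_eq_sinh_div_cosh]
    exact ⟨_, Or.inr (inv_div _ _).symm, rfl⟩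
  · rw [etaEven, if_neg hx0.not_ge, if_pos hxπ]
    exact ⟨_, Or.inl rfl, rfl⟩

lemma abs_etaNJ_sub_eta_le (n j : ℕ) {x : ℝ} (hx0 : 0 < x) (hxπ : x < π)
    (hB : 1 ≤ (n + 2) * beta x) : |etaNJ n j x - eta x| ≤ 8 * exp (-((n + 2) * beta x)) := by
  set T := ((n : ℝ) + 2) * beta x / 2 with hT
  have hrate : (1 - tanh T) / tanh T ≤ 4 * exp (-((n + 2) * beta x)) := by
    have h := one_sub_tanh_div_tanh_le (T := T) (by linarith)
    rwa [hT, mul_div_cancel₀ _ two_ne_zero] at h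
  have ht0 : 0 < tanh T := by
    rw [tanh_eq_exp_two_mul]
    have := add_one_le_exp (2 * T)
    exact div_pos (by linarith) (by linarith)
  obtain ⟨a, ha, hη⟩ := etaNJ_eq_of_mem_Ioo n j hx0 hxπ
  have ha0 : 0 < a := by rcases ha with rfl | rfl <;> positivity
  have hf0 := fsym_pos hx0 hxπ
  rw [hη, show eta x = 2 * arctan (1 / fsym x) from if_pos hxπ, ← mul_sub, abs_mul,
    abs_two]
  calc 2 * |arctan (a / fsym x) - arctan (1 / fsym x)|
      ≤ 2 * (fsym x * (|a - 1| / a)) := by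
        gcongr; exact abs_arctan_div_sub_arctan_one_div_le ha0 hf0
    _ ≤ 2 * (1 * ((1 - tanh T) / tanh T)) := by
        gcongr 2 * (?_ * ?_)
        · exact fsym_le_one x
        · exact abs_sub_one_div_self_le ht0 (tanh_lt_one T).le ha
    _ ≤ 8 * exp (-((n + 2) * beta x)) := by linarith

lemma min_le_mul_beta {N j x : ℝ} (hN : 0 < N) (hj : 0 ≤ j) (hx : j * π / N ≤ x) (hxπ : x ≤ π) :
    min (2 * j) (2 * N / π) ≤ N * beta x := by
  have hjx : 2 * j ≤ 2 / π * (N * x) := by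
    rw [div_le_iff₀ hN] at hx
    rw [div_mul_eq_mul_div, le_div_iff₀ pi_pos]
    linarith
  calc min (2 * j) (2 * N / π) ≤ min (2 / π * (N * x)) (2 / π * N) :=
        min_le_min hjx (le_of_eq (by ring))
    _ = N * (2 / π * min x 1) := by
        rw [mul_min_of_nonneg _ _ (by positivity), mul_min_of_nonneg _ _ hN.le]
        congr 1 <;> ring
    _ ≤ N * beta x := by
        gcongr
        exact two_div_pi_mul_min_le_beta ((div_nonneg (by positivity) hN.le).trans hx) hxπ

lemma exp_neg_min_mul_pow_le {N j : ℝ} (p : ℕ) (hN : 0 < N) (hj : p / 2 * log N ≤ j) :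
    exp (-min (2 * j) (2 * N / π)) * N ^ p ≤ p ! * (π / 2) ^ p := by
  have hfac : (1 : ℝ) ≤ p ! * (π / 2) ^ p :=
    one_le_mul_of_one_le_of_one_le (by exact_mod_cast p.factorial_pos)
      (one_le_pow₀ (by linarith [pi_gt_three]))
  rcases min_cases (2 * j) (2 * N / π) with ⟨hmin, _⟩ | ⟨hmin, _⟩ <;> rw [hmin]
  · calc exp (-(2 * j)) * N ^ p ≤ exp (-log (N ^ p)) * N ^ p := by
          gcongr
          rw [log_pow]
          linarith
      _ = 1 := by rw [exp_neg, exp_log (by positivity), inv_mul_cancel₀ (by positivity)]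
      _ ≤ p ! * (π / 2) ^ p := hfac
  · set y := 2 * N / π
    have hy : 0 ≤ y := by positivity
    have hNy : N = π / 2 * y := by simp only [y]; field_simp
    have := pow_div_factorial_le_exp y hy p
    rw [div_le_iff₀ (by positivity)] at this
    calc exp (-y) * N ^ p = (π / 2) ^ p * (exp (-y) * y ^ p) := by rw [hNy, mul_pow]; ring
      _ ≤ (π / 2) ^ p * (exp (-y) * (exp y * p !)) := by gcongr
      _ = p ! * (π / 2) ^ p * (exp (-y) * exp y) := by ring
      _ = p ! * (π / 2) ^ p := by rw [← exp_add, neg_add_cancel, exp_zero, mul_one]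

theorem stmt9 (p : ℕ) (hp : 1 ≤ p) :
    ∃ C : ℝ, 0 < C ∧ ∀ n : ℕ, 1 ≤ n → ∀ j : ℕ,
      (p : ℝ) / 2 * Real.log ((n : ℝ) + 2) ≤ (j : ℝ) → j ≤ n →
      ∀ x ∈ Set.Icc ((j : ℝ) * Real.pi / ((n : ℝ) + 2))
          (((j : ℝ) + 1) * Real.pi / ((n : ℝ) + 2)),
        |rho n j x| ≤ C / ((n : ℝ) + 2) ^ (p + 1) := by
  refine ⟨8 * p ! * (π / 2) ^ p, by positivity, fun n _ j hj hjn x ⟨hxl, hxr⟩ => ?_⟩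
  set N : ℝ := n + 2
  have hN : 2 ≤ N := by simp [N]
  have hj1 : (1 : ℝ) ≤ j := by
    have hlog : 0 < log N := log_pos (by linarith)
    have hp0 : (0 : ℝ) < p := by exact_mod_cast hp
    exact_mod_cast (show (0 : ℝ) < j from lt_of_lt_of_le (by positivity) hj)
  have hxπ : x < π := by
    have : (j : ℝ) + 1 < N := by simp only [N]; exact_mod_cast (by omega : j + 1 < n + 2)
    have : ((j : ℝ) + 1) * π / N < π := by
      rw [div_lt_iff₀ (by positivity)]; nlinarith [pi_pos]
    linarith
  have hx0 : 0 < x := lt_of_lt_of_le (by positivity) hxl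
  have hmin := min_le_mul_beta (by positivity) (by positivity) hxl hxπ.le
  have hB : 1 ≤ N * beta x :=
    le_trans (le_min (by linarith) (by rw [le_div_iff₀ pi_pos]; linarith [pi_lt_four])) hmin
  have hdecay := (exp_neg_min_mul_pow_le p (by positivity) hj).trans' <|
    mul_le_mul_of_nonneg_right (exp_le_exp.2 (neg_le_neg hmin)) (by positivity)
  rw [rho, abs_div, abs_of_pos (show 0 < N by positivity), pow_succ,
    div_le_div_iff₀ (by positivity) (by positivity)]
  calc |etaNJ n j x - eta x| * (N ^ p * N) ≤ 8 * exp (-(N * beta x)) * (N ^ p * N) := by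
        gcongr; exact abs_etaNJ_sub_eta_le n j hx0 hxπ hB
    _ ≤ 8 * p ! * (π / 2) ^ p * N := by nlinarith
end

section
/- For each integer j ≥ 1 there exists exactly one real number α_j in the open interval (jπ, (j+1)π) satisfying tanh(α_j/2) = (−1)^j tan(α_j/2). Moreover, α_j > (2j+1)π/2 when j is odd, and α_j < (2j+1)π/2 when j is even. -/
/-!
Put `x = α / 2` and `s = (-1) ^ j`; the equation becomes `f x = 0` for
`f x = tan x - s * tanh x`. For `s ≤ 1` the derivative `sec² x - s * sech² x` is positive away
from `0`, so `f` is strictly increasing on every branch `(mπ - π/2, mπ + π/2)` of `tan` with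
`m ≠ 0`, and `(jπ/2, (j+1)π/2)` lies in one of them. The intermediate value theorem locates the
root: for `j = 2k`, `f (kπ) = -tanh (kπ) < 0 < 1 - tanh (kπ + π/4) = f (kπ + π/4)`; for
`j = 2k + 1` and `m = k + 1`, `f (mπ - π/4) = tanh (mπ - π/4) - 1 < 0 < tanh (mπ) = f (mπ)`.
-/

open Real Set

namespace Real

theorem hasDerivAt_tanh (x : ℝ) : HasDerivAt tanh (1 - tanh x ^ 2) x := by
  have h : HasDerivAt (fun y => sinh y / cosh y) _ x :=
    (hasDerivAt_sinh x).div (hasDerivAt_cosh x) (cosh_pos x).ne'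
  rw [show tanh = fun y => sinh y / cosh y from funext tanh_eq_sinh_div_cosh]
  convert h using 1
  field_simp

theorem tanh_pos {x : ℝ} (hx : 0 < x) : 0 < tanh x := by
  rw [tanh_eq_sinh_div_cosh]
  exact div_pos (sinh_pos_iff.2 hx) (cosh_pos x)

theorem cos_ne_zero_of_mem_Ioo_int_mul_pi {m : ℤ} {x : ℝ}
    (hx : x ∈ Ioo (m * π - π / 2) (m * π + π / 2)) : cos x ≠ 0 := by
  have hpos : 0 < cos (x - m * π) :=
    cos_pos_of_mem_Ioo ⟨by linarith [hx.1], by linarith [hx.2]⟩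
  rw [cos_sub_int_mul_pi] at hpos
  exact right_ne_zero_of_mul hpos.ne'

theorem tanh_eq_mul_tan_iff {s : ℝ} (hs : s * s = 1) (y : ℝ) :
    tanh y = s * tan y ↔ tan y - s * tanh y = 0 := by
  constructor <;> intro h
  · linear_combination (-s) * h - tan y * hs
  · linear_combination (-s) * h - tanh y * hs

section TanSubMulTanh

variable {s : ℝ} {m : ℤ}

theorem hasDerivAt_tan_sub_mul_tanh (s : ℝ) {x : ℝ} (hx : cos x ≠ 0) :
    HasDerivAt (fun y => tan y - s * tanh y) (1 / cos x ^ 2 - s * (1 - tanh x ^ 2)) x :=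
  (hasDerivAt_tan hx).sub ((hasDerivAt_tanh x).const_mul s)

theorem continuousOn_tan_sub_mul_tanh (s : ℝ) :
    ContinuousOn (fun x => tan x - s * tanh x) (Ioo (m * π - π / 2) (m * π + π / 2)) :=
  fun _ hx => (hasDerivAt_tan_sub_mul_tanh s
    (cos_ne_zero_of_mem_Ioo_int_mul_pi hx)).continuousAt.continuousWithinAt

theorem strictMonoOn_tan_sub_mul_tanh (hs : s ≤ 1) (hm : m ≠ 0) :
    StrictMonoOn (fun x => tan x - s * tanh x) (Ioo (m * π - π / 2) (m * π + π / 2)) := by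
  refine strictMonoOn_of_deriv_pos (convex_Ioo _ _) (continuousOn_tan_sub_mul_tanh s) ?_
  intro x hx
  rw [interior_Ioo] at hx
  have hcos := cos_ne_zero_of_mem_Ioo_int_mul_pi hx
  rw [(hasDerivAt_tan_sub_mul_tanh s hcos).deriv]
  have hx₀ : x ≠ 0 := by
    rintro rfl
    rcases lt_or_gt_of_ne hm with hm | hm
    · have : (m : ℝ) ≤ -1 := by exact_mod_cast Int.le_sub_one_of_lt hm
      nlinarith [hx.2, pi_pos]
    · have : (1 : ℝ) ≤ m := by exact_mod_cast hm
      nlinarith [hx.1, pi_pos]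
  have hsec : 1 ≤ 1 / cos x ^ 2 := one_le_one_div (by positivity) (cos_sq_le_one x)
  have htanh : tanh x ≠ 0 := fun h => hx₀ (tanh_injective (h.trans tanh_zero.symm))
  have : 0 < tanh x ^ 2 := by positivity
  -- `s * (1 - tanh x ^ 2) ≤ 1 - tanh x ^ 2 < 1 ≤ 1 / cos x ^ 2`
  nlinarith [tanh_sq_lt_one x]

theorem exists_tan_sub_mul_tanh_eq_zero_of_pos (hs₀ : 0 < s) (hs₁ : s ≤ 1) (hm : 0 < m) :
    ∃ x ∈ Ioo (m * π) (m * π + π / 4), tan x - s * tanh x = 0 := by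
  have hmπ : π ≤ m * π := le_mul_of_one_le_left pi_pos.le (by exact_mod_cast hm)
  have hleft : tan (m * π) - s * tanh (m * π) < 0 := by
    rw [tan_int_mul_pi]
    nlinarith [tanh_pos (pi_pos.trans_le hmπ)]
  have hright : 0 < tan (m * π + π / 4) - s * tanh (m * π + π / 4) := by
    rw [add_comm, tan_add_int_mul_pi, tan_pi_div_four]
    nlinarith [tanh_pos (by linarith [pi_pos] : 0 < π / 4 + m * π), tanh_lt_one (π / 4 + m * π)]
  have hsub : Icc (m * π) (m * π + π / 4) ⊆ Ioo (m * π - π / 2) (m * π + π / 2) :=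
    Icc_subset_Ioo (by linarith [pi_pos]) (by linarith [pi_pos])
  exact intermediate_value_Ioo (by linarith [pi_pos])
    ((continuousOn_tan_sub_mul_tanh s).mono hsub) ⟨hleft, hright⟩

theorem exists_tan_sub_mul_tanh_eq_zero_of_neg (hs₀ : s < 0) (hs₁ : -1 ≤ s) (hm : 0 < m) :
    ∃ x ∈ Ioo (m * π - π / 4) (m * π), tan x - s * tanh x = 0 := by
  have hmπ : π ≤ m * π := le_mul_of_one_le_left pi_pos.le (by exact_mod_cast hm)
  have hleft : tan (m * π - π / 4) - s * tanh (m * π - π / 4) < 0 := by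
    rw [tan_int_mul_pi_sub, tan_pi_div_four]
    nlinarith [tanh_pos (by linarith [pi_pos] : 0 < m * π - π / 4), tanh_lt_one (m * π - π / 4)]
  have hright : 0 < tan (m * π) - s * tanh (m * π) := by
    rw [tan_int_mul_pi]
    nlinarith [tanh_pos (pi_pos.trans_le hmπ)]
  have hsub : Icc (m * π - π / 4) (m * π) ⊆ Ioo (m * π - π / 2) (m * π + π / 2) :=
    Icc_subset_Ioo (by linarith [pi_pos]) (by linarith [pi_pos])
  exact intermediate_value_Ioo (by linarith [pi_pos])
    ((continuousOn_tan_sub_mul_tanh s).mono hsub) ⟨hleft, hright⟩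

end TanSubMulTanh

end Real

theorem stmt11 (j : ℕ) (hj : 1 ≤ j) :
    ∃ α : ℝ,
      (α ∈ Set.Ioo ((j : ℝ) * Real.pi) (((j : ℝ) + 1) * Real.pi) ∧
        Real.tanh (α / 2) = (-1 : ℝ) ^ j * Real.tan (α / 2)) ∧
      (∀ α' : ℝ, α' ∈ Set.Ioo ((j : ℝ) * Real.pi) (((j : ℝ) + 1) * Real.pi) →
        Real.tanh (α' / 2) = (-1 : ℝ) ^ j * Real.tan (α' / 2) → α' = α) ∧
      (Odd j → (2 * (j : ℝ) + 1) * Real.pi / 2 < α) ∧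
      (Even j → α < (2 * (j : ℝ) + 1) * Real.pi / 2) := by
  have hπ := pi_pos
  simp_rw [tanh_eq_mul_tan_iff (by rw [← mul_pow]; norm_num : (-1 : ℝ) ^ j * (-1) ^ j = 1)]
  obtain ⟨k, rfl | rfl⟩ := Nat.even_or_odd' j
  · have hk : (0 : ℤ) < k := by omega
    obtain ⟨x, hx, hfx⟩ := exists_tan_sub_mul_tanh_eq_zero_of_pos one_pos le_rfl hk
    have hinj := (strictMonoOn_tan_sub_mul_tanh le_rfl hk.ne').injOn
    rw [(even_two_mul k).neg_one_pow]
    push_cast at hx hinj ⊢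
    refine ⟨2 * x, ⟨⟨by linarith [hx.1], by linarith [hx.2]⟩, by simpa using hfx⟩,
      fun α hα hfα => ?_, fun h => absurd h (Nat.not_odd_iff_even.2 (even_two_mul k)),
      fun _ => by linarith [hx.2]⟩
    have hhalf : α / 2 = x := hinj ⟨by linarith [hα.1], by linarith [hα.2]⟩
      ⟨by linarith [hx.1], by linarith [hx.2]⟩ (hfα.trans hfx.symm)
    linarith
  · have hk : (0 : ℤ) < k + 1 := by omega
    obtain ⟨x, hx, hfx⟩ := exists_tan_sub_mul_tanh_eq_zero_of_neg neg_one_lt_zero le_rfl hk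
    have hinj := (strictMonoOn_tan_sub_mul_tanh (by norm_num : (-1 : ℝ) ≤ 1) hk.ne').injOn
    rw [(odd_two_mul_add_one k).neg_one_pow]
    push_cast at hx hinj ⊢
    refine ⟨2 * x, ⟨⟨by linarith [hx.1], by linarith [hx.2]⟩, by simpa using hfx⟩,
      fun α hα hfα => ?_, fun _ => by linarith [hx.1],
      fun h => absurd h (Nat.not_even_iff_odd.2 (odd_two_mul_add_one k))⟩
    have hhalf : α / 2 = x := hinj ⟨by linarith [hα.1], by linarith [hα.2]⟩
      ⟨by linarith [hx.1], by linarith [hx.2]⟩ (hfα.trans hfx.symm)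
    linarith
end
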